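/- arXiv:1404.0455 — 10 statements merged into one kernel-verified Lean document; each statement's English description precedes it below -/
import Mathlib

section
/- Let ξ be irrational and let I ⊂ ℝ/ℤ be an interval whose length is congruent to kξ mod ℤ for some integer k. Then for every x ∈ ℝ/ℤ the local discrepancy D(N) = #{0 ≤ n ≤ N : x + nξ mod ℤ ∈ I} − N·length(I) is bounded uniformly in N. -/
open scoped Classical

/-- The local discrepancy of the orbit `x, x+ξ, ..., x+Nξ` (mod ℤ) with respect to
the interval `[a,b) ⊆ [0,1)` (viewed as an interval in ℝ/ℤ). -/
noncomputable def localDisc (ξ x a b : ℝ) (N : ℕ) : ℝ :=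
  (((Finset.range (N + 1)).filter
      (fun n => Int.fract (x + n * ξ) ∈ Set.Ico a b)).card : ℝ) - N * (b - a)

/-!
The indicator of `[a, b)` evaluated at `{t}` equals `(b - a) + {t - b} - {t - a}`. Summing along
the orbit, the discrepancy becomes `b - a` plus the difference of the window sums over
`n ≤ N` of `{x + nξ - b}` and of `{x + nξ - a}`. When `b - a = kξ + m`, the first sequence is the
second one shifted by `k`, so the two windows differ in at most `|k|` terms at each end, each
in `[0, 1)`.
-/

open Finset

theorem abs_sub_le_mul_of_abs_succ_sub_le {S : ℤ → ℝ} {C : ℝ}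
    (hS : ∀ s, |S (s + 1) - S s| ≤ C) (k : ℤ) : |S k - S 0| ≤ |k| * C := by
  induction k using Int.induction_on with
  | zero => simp
  | succ i ih =>
    calc |S (i + 1) - S 0| ≤ |S (i + 1) - S i| + |S i - S 0| := abs_sub_le _ _ _
      _ ≤ C + |(i : ℤ)| * C := add_le_add (hS i) ih
      _ = |(i : ℤ) + 1| * C := by
          rw [Nat.abs_cast, abs_of_nonneg (by positivity : (0 : ℤ) ≤ i + 1)]; push_cast; ring
  | pred i ih =>
    calc |S (-i - 1) - S 0| ≤ |S (-i - 1 + 1) - S (-i - 1)| + |S (-i) - S 0| := by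
          rw [sub_add_cancel, abs_sub_comm (S (-i))]; exact abs_sub_le _ _ _
      _ ≤ C + |-(i : ℤ)| * C := add_le_add (hS _) ih
      _ = |-(i : ℤ) - 1| * C := by
          rw [abs_neg, Nat.abs_cast, show -(i : ℤ) - 1 = -(i + 1) by ring, abs_neg,
            abs_of_nonneg (by positivity : (0 : ℤ) ≤ i + 1)]
          push_cast; ring

theorem sum_range_add_one_sub_sum_range (f : ℤ → ℝ) (M : ℕ) (s : ℤ) :
    ∑ n ∈ range M, f (n + (s + 1)) - ∑ n ∈ range M, f (n + s) = f (M + s) - f s := by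
  have h := sum_range_succ' (fun n : ℕ => f (n + s)) M
  rw [sum_range_succ] at h
  simp only [Nat.cast_add, Nat.cast_one, Nat.cast_zero, zero_add, add_assoc,
    add_comm (1 : ℤ)] at h
  linarith

theorem abs_sum_range_shift_sub_le {f : ℤ → ℝ} {C : ℝ} (hf : ∀ i j, |f i - f j| ≤ C)
    (M : ℕ) (k : ℤ) :
    |∑ n ∈ range M, f (n + k) - ∑ n ∈ range M, f n| ≤ |k| * C := by
  simpa using abs_sub_le_mul_of_abs_succ_sub_le (S := fun s => ∑ n ∈ range M, f (n + s))
    (fun s => (sum_range_add_one_sub_sum_range f M s).symm ▸ hf _ _) k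

section FloorRing

variable {R : Type*} [CommRing R] [LinearOrder R] [IsStrictOrderedRing R] [FloorRing R]

theorem Int.fract_sub_of_le_one {a : R} (ha : 0 ≤ a) (ha1 : a ≤ 1) (t : R) :
    Int.fract (t - a) = Int.fract t - a + if Int.fract t < a then 1 else 0 := by
  have h0 := Int.fract_nonneg t
  have h1 := Int.fract_lt_one t
  rw [Int.fract_eq_iff]
  split_ifs with h
  · exact ⟨by linarith, by linarith, ⌊t⌋ - 1, by rw [Int.fract]; push_cast; abel⟩
  · exact ⟨by linarith, by linarith, ⌊t⌋, by rw [Int.fract]; abel⟩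

theorem ite_fract_mem_Ico {a b : R} (ha : 0 ≤ a) (hab : a ≤ b) (hb : b ≤ 1) (t : R) :
    (if Int.fract t ∈ Set.Ico a b then (1 : R) else 0)
      = (b - a) + (Int.fract (t - b) - Int.fract (t - a)) := by
  simp only [Set.mem_Ico]
  rw [Int.fract_sub_of_le_one ha (hab.trans hb), Int.fract_sub_of_le_one (ha.trans hab) hb]
  split_ifs <;> grind

end FloorRing

/- In `localDisc` the bound variable `n` is real, so the filter runs over the image of
`range (N + 1)` in `ℝ`; `bind_pure_comp` and `fmap_def` expose that image. -/
theorem localDisc_eq {a b : ℝ} (ha : 0 ≤ a) (hab : a ≤ b) (hb : b ≤ 1) (ξ x : ℝ) (N : ℕ) :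
    localDisc ξ x a b N = (b - a) +
      ∑ n ∈ range (N + 1), (Int.fract (x + n * ξ - b) - Int.fract (x + n * ξ - a)) := by
  rw [localDisc, bind_pure_comp, fmap_def, filter_image,
    card_image_of_injective _ Nat.cast_injective, natCast_card_filter]
  simp only [ite_fract_mem_Ico ha hab hb, sum_add_distrib, sum_const, card_range, nsmul_eq_mul]
  push_cast
  ring

theorem hecke_ostrowski_general (ξ a b : ℝ)
    (ha : 0 ≤ a) (hab : a ≤ b) (hb : b ≤ 1)
    (hlen : ∃ k m : ℤ, b - a = k * ξ + m) :
    ∀ x : ℝ, ∃ C : ℝ, 0 < C ∧ ∀ N : ℕ, |localDisc ξ x a b N| < C := by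
  intro x
  obtain ⟨k, m, hkm⟩ := hlen
  set g : ℤ → ℝ := fun j => Int.fract (x + j * ξ - a)
  have hg : ∀ i j, |g i - g j| ≤ 1 := fun i j => by
    have := Int.fract_nonneg (x + i * ξ - a); have := Int.fract_lt_one (x + i * ξ - a)
    have := Int.fract_nonneg (x + j * ξ - a); have := Int.fract_lt_one (x + j * ξ - a)
    exact abs_sub_le_iff.2 ⟨by linarith, by linarith⟩
  have hshift (n : ℕ) : Int.fract (x + n * ξ - b) = g (n + -k) := by
    rw [show x + n * ξ - b = x + ((n + -k : ℤ) : ℝ) * ξ - a - m by push_cast; linarith,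
      Int.fract_sub_intCast]
  have hself (n : ℕ) : Int.fract (x + n * ξ - a) = g n := by simp [g]
  refine ⟨|(k : ℝ)| + 2, by positivity, fun N => ?_⟩
  rw [localDisc_eq ha hab hb, sum_sub_distrib]
  simp only [hshift, hself]
  calc |(b - a) + _| ≤ |b - a| + _ := abs_add_le _ _
    _ ≤ 1 + |(k : ℝ)| := by
        refine add_le_add (by rw [abs_of_nonneg (by linarith)]; linarith) ?_
        simpa using abs_sum_range_shift_sub_le hg (N + 1) (-k)
    _ < |(k : ℝ)| + 2 := by linarith

/-- Hecke–Ostrowski: if the length of the interval is congruent to `kξ` mod ℤ,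
then the local discrepancy is bounded, for every starting point `x`. -/
theorem hecke_ostrowski (ξ a b : ℝ) (hξ : Irrational ξ)
    (ha : 0 ≤ a) (hab : a ≤ b) (hb : b ≤ 1)
    (hlen : ∃ k m : ℤ, b - a = k * ξ + m) :
    ∀ x : ℝ, ∃ C : ℝ, 0 < C ∧ ∀ N : ℕ, |localDisc ξ x a b N| < C :=
  hecke_ostrowski_general ξ a b ha hab hb hlen
end

section
/- Let ξ be irrational and I ⊂ ℝ/ℤ an interval. If there exists a constant C > 0 and a point x ∈ ℝ/ℤ such that |#{0 ≤ n ≤ N : x + nξ mod ℤ ∈ I} − N·length(I)| < C for all N, then length(I) ≡ kξ mod ℤ for some integer k. -/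
open scoped Classical

/-!
Write `g = 1_I ∘ fract - |I|`, so that the discrepancies are the Birkhoff sums `S_n` of `g` under
the rotation `y ↦ y + ξ`. Each `S_n` is locally constant from the right and the forward orbit of
`x` is dense mod 1, so `S_n y = S_n (x + jξ) = S_{j+n} x - S_j x` for some `j`: the Birkhoff sums
are bounded uniformly in `y`. Then `ψ = limsup S_n` is a measurable periodic solution of
`ψ = g + ψ (· + ξ)`, so `e(ψ)`, with `e(t) = exp(2πit)`, is an `L²` eigenfunction of the rotation
with eigenvalue `e(|I|)`. Comparing Fourier coefficients, `e(|I|) = e(kξ)` for some `k ∈ ℤ`.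
-/

open Set Filter MeasureTheory AddCircle Function
open scoped Topology

theorem Function.Periodic.birkhoffSum_add_right {α M : Type*} [AddCommMonoid α]
    [AddCommMonoid M] {g : α → M} {c : α} (hg : Periodic g c) (ξ : α) (n : ℕ) :
    Periodic (birkhoffSum (· + ξ) g n) c := fun x => by
  simp only [_root_.birkhoffSum, add_right_iterate_apply, add_right_comm x c, hg _]

theorem Measurable.birkhoffSum {α M : Type*} [MeasurableSpace α] [AddCommMonoid M]
    [MeasurableSpace M] [MeasurableAdd₂ M] {f : α → α} {g : α → M} (hf : Measurable f)
    (hg : Measurable g) (n : ℕ) : Measurable (birkhoffSum f g n) :=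
  Finset.measurable_sum _ fun k _ => hg.comp (hf.iterate k)

theorem limsup_birkhoffSum_eq_add {α : Type*} (f : α → α) (g : α → ℝ) (x : α) {B : ℝ}
    (hB : ∀ n, |birkhoffSum f g n (f x)| ≤ B) :
    limsup (fun n => birkhoffSum f g n x) atTop =
      g x + limsup (fun n => birkhoffSum f g n (f x)) atTop := by
  rw [← limsup_nat_add _ 1]
  simp_rw [birkhoffSum_succ']
  exact limsup_const_add atTop _ (g x) (isBoundedUnder_of ⟨B, fun n => (abs_le.1 (hB n)).2⟩)
    (IsBoundedUnder.isCoboundedUnder_le (isBoundedUnder_of ⟨-B, fun n => (abs_le.1 (hB n)).1⟩))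

theorem eventually_nhdsGT_mem_Ico_iff {α : Type*} [LinearOrder α] [TopologicalSpace α]
    [OrderTopology α] (a b u : α) : ∀ᶠ z in 𝓝[>] u, (z ∈ Ico a b ↔ u ∈ Ico a b) := by
  rcases lt_or_ge u a with hua | hau
  · filter_upwards [nhdsWithin_le_nhds (Iio_mem_nhds hua)] with z hz
    simp [hz.not_ge, hua.not_ge]
  rcases lt_or_ge u b with hub | hbu
  · filter_upwards [Ioo_mem_nhdsGT hub] with z hz
    simp [hau, hub, hau.trans hz.1.le, hz.2]
  · filter_upwards [self_mem_nhdsWithin] with z (hz : u < z)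
    simp [hbu.not_gt, (hbu.trans hz.le).not_gt]

section RightLocallyConstant

variable {α M : Type*} [AddCommGroup α] [LinearOrder α] [IsOrderedAddMonoid α]
  [TopologicalSpace α] [OrderTopology α]

theorem Filter.Eventually.nhdsGT_comp_add_right {g : α → M} {y c : α}
    (hg : ∀ᶠ z in 𝓝[>] (y + c), g z = g (y + c)) : ∀ᶠ z in 𝓝[>] y, g (z + c) = g (y + c) := by
  rwa [← Filter.map_add_right_nhdsGT] at hg

variable [AddCommMonoid M]

theorem eventually_nhdsGT_birkhoffSum_add_right_eq {g : α → M}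
    (hg : ∀ y, ∀ᶠ z in 𝓝[>] y, g z = g y) (ξ : α) (n : ℕ) (y : α) :
    ∀ᶠ z in 𝓝[>] y, birkhoffSum (· + ξ) g n z = birkhoffSum (· + ξ) g n y := by
  have hk (k : ℕ) : ∀ᶠ z in 𝓝[>] y, g (z + k • ξ) = g (y + k • ξ) := (hg _).nhdsGT_comp_add_right
  filter_upwards [(Finset.range n).eventually_all.2 fun k _ => hk k] with z hz
  simp only [birkhoffSum, add_right_iterate_apply]
  exact Finset.sum_congr rfl hz

end RightLocallyConstant

theorem eventually_nhdsGT_comp_fract_eq {α M : Type*} [Ring α] [LinearOrder α]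
    [IsStrictOrderedRing α] [FloorRing α] [TopologicalSpace α] [OrderTopology α] {g : α → M}
    (hg : ∀ y, ∀ᶠ z in 𝓝[>] y, g z = g y) (y : α) :
    ∀ᶠ z in 𝓝[>] y, g (Int.fract z) = g (Int.fract y) := by
  have hfloor : ∀ᶠ z in 𝓝[>] y, ⌊z⌋ = ⌊y⌋ :=
    nhdsWithin_mono _ Ioi_subset_Ici_self (tendsto_pure.1 (tendsto_floor_right_pure_floor y))
  have hshift : ∀ᶠ z in 𝓝[>] y, g (z + -⌊y⌋) = g (y + -⌊y⌋) :=
    (hg _).nhdsGT_comp_add_right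
  filter_upwards [hfloor, hshift] with z hz hgz
  rw [Int.fract, Int.fract, hz, sub_eq_add_neg, sub_eq_add_neg]
  exact hgz

theorem dense_setOf_nat_mul_add_int {ξ : ℝ} (hξ : Irrational ξ) :
    Dense {t : ℝ | ∃ (j : ℕ) (m : ℤ), t = j * ξ + m} := by
  have hdense : DenseRange (fun j : ℕ => j • (ξ : AddCircle (1 : ℝ))) :=
    denseRange_zsmul_iff_nsmul.1 (denseRange_zsmul_coe_iff.2 (by simpa using hξ))
  refine (QuotientAddGroup.dense_preimage_mk.2 hdense).mono ?_
  rintro t ⟨j, hj⟩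
  have : ((t - j * ξ : ℝ) : AddCircle (1 : ℝ)) = 0 := by
    rw [coe_sub, ← hj, ← nsmul_eq_mul, coe_nsmul, sub_self]
  obtain ⟨m, hm⟩ := (coe_eq_zero_iff 1).1 this
  exact ⟨j, m, by rw [zsmul_one] at hm; linarith⟩

theorem abs_birkhoffSum_le_two_mul {ξ x C : ℝ} {g : ℝ → ℝ} (hξ : Irrational ξ)
    (hgp : Periodic g 1) (hgr : ∀ y, ∀ᶠ z in 𝓝[>] y, g z = g y)
    (hx : ∀ n, |birkhoffSum (· + ξ) g n x| ≤ C) (n : ℕ) (y : ℝ) :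
    |birkhoffSum (· + ξ) g n y| ≤ 2 * C := by
  obtain ⟨u, hyu, hsub⟩ :=
    mem_nhdsGT_iff_exists_Ioo_subset.1 (eventually_nhdsGT_birkhoffSum_add_right_eq hgr ξ n y)
  obtain ⟨-, ⟨j, m, rfl⟩, hjm⟩ :=
    (dense_setOf_nat_mul_add_int hξ).exists_between (sub_lt_sub_right (mem_Ioi.1 hyu) x)
  have hSp : Periodic (birkhoffSum (· + ξ) g n) 1 := hgp.birkhoffSum_add_right ξ n
  calc |birkhoffSum (· + ξ) g n y|
      = |birkhoffSum (· + ξ) g n (x + j • ξ + m * 1)| := by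
        have hmem : x + j • ξ + m * 1 ∈ Ioo y u := by
          rw [nsmul_eq_mul, mul_one]
          constructor <;> linarith [hjm.1, hjm.2]
        rw [hsub hmem]
    _ = |birkhoffSum (· + ξ) g (j + n) x - birkhoffSum (· + ξ) g j x| := by
        rw [hSp.int_mul m, birkhoffSum_add, add_right_iterate_apply, add_sub_cancel_left]
    _ ≤ |birkhoffSum (· + ξ) g (j + n) x| + |birkhoffSum (· + ξ) g j x| := abs_sub _ _
    _ ≤ 2 * C := by linarith [hx (j + n), hx j]

section Fourier
variable {T : ℝ} [Fact (0 < T)]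

theorem fourierCoeff_comp_add_right {E : Type*} [NormedAddCommGroup E] [NormedSpace ℂ E]
    (f : AddCircle T → E) (c : AddCircle T) (n : ℤ) :
    fourierCoeff (fun z => f (z + c)) n = fourier n c • fourierCoeff f n := by
  have hshift (t : AddCircle T) : fourier (-n) (t - c) = fourier n c * fourier (-n) t := by
    simp only [fourier_apply, ← Circle.coe_mul, ← toCircle_add]
    congr 2
    rw [smul_sub, neg_smul, neg_smul]; abel
  calc fourierCoeff (fun z => f (z + c)) n
      = ∫ t, fourier (-n) (t + c - c) • f (t + c) ∂haarAddCircle := by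
        simp only [fourierCoeff, add_sub_cancel_right]
    _ = ∫ t, fourier (-n) (t - c) • f t ∂haarAddCircle :=
        integral_add_right_eq_self (fun t => fourier (-n) (t - c) • f t) c
    _ = fourier n c • fourierCoeff f n := by
        simp only [hshift, mul_smul, integral_smul, fourierCoeff]

theorem exists_fourierCoeff_ne_zero {f : AddCircle T → ℂ} (hf : MemLp f 2 haarAddCircle)
    (hf0 : ¬ f =ᵐ[haarAddCircle] 0) : ∃ n, fourierCoeff f n ≠ 0 := by
  by_contra! h
  have hrepr : fourierBasis.repr (hf.toLp f) = 0 := by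
    ext n
    rw [fourierBasis_repr, fourierCoeff_congr_ae hf.coeFn_toLp, h]
    rfl
  refine hf0 ((MemLp.toLp_eq_toLp_iff hf MemLp.zero).1 ?_)
  rw [MemLp.toLp_zero]
  exact fourierBasis.repr.injective (hrepr.trans (map_zero _).symm)

theorem exists_eq_fourier_of_comp_add_eq_mul {f : AddCircle T → ℂ} (hf : MemLp f 2 haarAddCircle)
    (hf0 : ¬ f =ᵐ[haarAddCircle] 0) {c : AddCircle T} {μ : ℂ} (hfc : ∀ z, f (z + c) = μ * f z) :
    ∃ n : ℤ, μ = fourier n c := by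
  obtain ⟨n, hn⟩ := exists_fourierCoeff_ne_zero hf hf0
  refine ⟨n, mul_right_cancel₀ hn ?_⟩
  rw [← fourierCoeff.const_mul, ← smul_eq_mul, ← fourierCoeff_comp_add_right]
  simp_rw [hfc]


theorem Function.Periodic.measurable_lift {β : Type*} [MeasurableSpace β] {f : ℝ → β}
    (hf : Periodic f T) (hm : Measurable f) : Measurable (hf.lift : AddCircle T → β) := by
  have : hf.lift = f ∘ (↑) ∘ measurableEquivIco T 0 := by
    funext z
    conv_lhs => rw [← coe_equivIco (a := 0) (y := z)]
    rfl
  rw [this]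
  exact hm.comp (measurable_subtype_coe.comp (measurableEquivIco T 0).measurable)

theorem exists_int_eq_of_coe_comp_add_eq {ξ β : ℝ} {ψ : ℝ → ℝ} (hψm : Measurable ψ)
    (hψp : Periodic ψ T) (hψ : ∀ y, (ψ (y + ξ) : AddCircle T) = ψ y + β) :
    ∃ n m : ℤ, β = n * ξ + m * T := by
  have hper : Periodic (fun y => (toCircle (ψ y : AddCircle T) : ℂ)) T := fun y => by
    simp only [hψp y]
  set f : AddCircle T → ℂ := hper.lift
  have hfm : Measurable f := hper.measurable_lift (by fun_prop)
  have hnorm (z : AddCircle T) : ‖f z‖ = 1 := by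
    induction z using QuotientAddGroup.induction_on with
    | H y => exact Circle.norm_coe _
  have hf2 : MemLp f 2 haarAddCircle :=
    .of_bound hfm.aestronglyMeasurable 1 (.of_forall fun z => (hnorm z).le)
  have hf0 : ¬ f =ᵐ[haarAddCircle] 0 := fun h => by
    obtain ⟨z, hz⟩ := h.exists
    simpa [hz] using hnorm z
  have hfξ (z : AddCircle T) : f (z + ξ) = toCircle (β : AddCircle T) * f z := by
    induction z using QuotientAddGroup.induction_on with
    | H y =>
      change (toCircle (ψ (y + ξ) : AddCircle T) : ℂ) = _ * toCircle (ψ y : AddCircle T)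
      rw [hψ, toCircle_add, Circle.coe_mul, mul_comm]
  obtain ⟨n, hn⟩ := exists_eq_fourier_of_comp_add_eq_mul hf2 hf0 hfξ
  have hcoe : ((β - n * ξ : ℝ) : AddCircle T) = 0 := by
    rw [fourier_apply] at hn
    have := injective_toCircle (Fact.out : 0 < T).ne' (Circle.coe_inj.1 hn)
    rw [coe_sub, this, ← zsmul_eq_mul, coe_zsmul, sub_self]
  obtain ⟨m, hm⟩ := (coe_eq_zero_iff T).1 hcoe
  exact ⟨n, m, by rw [zsmul_eq_mul] at hm; linarith⟩

end Fourier

noncomputable def discrepancySummand (a b y : ℝ) : ℝ :=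
  (Ico a b).indicator 1 (Int.fract y) - (b - a)

theorem discrepancySummand_periodic (a b : ℝ) : Periodic (discrepancySummand a b) 1 := fun y => by
  simp only [discrepancySummand, Int.fract_add_one]

theorem measurable_discrepancySummand (a b : ℝ) : Measurable (discrepancySummand a b) :=
  ((measurable_const.indicator measurableSet_Ico).comp measurable_fract).sub_const _

theorem coe_discrepancySummand (a b y : ℝ) :
    (discrepancySummand a b y : AddCircle (1 : ℝ)) = -(b - a : ℝ) := by
  rw [discrepancySummand, coe_sub]
  by_cases h : Int.fract y ∈ Ico a b
  · rw [indicator_of_mem h, Pi.one_apply, coe_period, zero_sub]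
  · rw [indicator_of_notMem h, QuotientAddGroup.mk_zero, zero_sub]

theorem eventually_nhdsGT_discrepancySummand_eq (a b y : ℝ) :
    ∀ᶠ z in 𝓝[>] y, discrepancySummand a b z = discrepancySummand a b y := by
  have hind (u : ℝ) :
      ∀ᶠ z in 𝓝[>] u, (Ico a b).indicator (1 : ℝ → ℝ) z = (Ico a b).indicator 1 u := by
    filter_upwards [eventually_nhdsGT_mem_Ico_iff a b u] with z hz
    simp only [indicator_apply, hz, Pi.one_apply]
  filter_upwards [eventually_nhdsGT_comp_fract_eq hind y] with z hz
  rw [discrepancySummand, discrepancySummand, hz]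

theorem localDisc_eq_birkhoffSum (ξ x a b : ℝ) (N : ℕ) :
    localDisc ξ x a b N = birkhoffSum (· + ξ) (discrepancySummand a b) (N + 1) x + (b - a) := by
  -- `n * ξ` in `localDisc` casts the whole index set to a `Finset ℝ`, through the `Finset` monad.
  rw [localDisc, bind_pure_comp, Finset.fmap_def, Finset.filter_image,
    Finset.card_image_of_injective _ Nat.cast_injective, Finset.card_filter]
  simp only [birkhoffSum, discrepancySummand, add_right_iterate_apply, nsmul_eq_mul,
    Finset.sum_sub_distrib, Finset.sum_const, Finset.card_range, indicator_apply, Pi.one_apply]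
  push_cast
  ring

theorem kesten_general (ξ a b : ℝ) (hξ : Irrational ξ)
    (hbd : ∃ C : ℝ, 0 < C ∧ ∃ x : ℝ, ∀ N : ℕ, |localDisc ξ x a b N| < C) :
    ∃ k m : ℤ, b - a = k * ξ + m := by
  obtain ⟨C, -, x, hx⟩ := hbd
  set g := discrepancySummand a b
  have hxS (n : ℕ) : |birkhoffSum (· + ξ) g n x| ≤ C + |b - a| := by
    rcases n with _ | N
    · simpa using add_nonneg ((abs_nonneg _).trans (hx 0).le) (abs_nonneg (b - a))
    · rw [eq_sub_of_add_eq (localDisc_eq_birkhoffSum ξ x a b N).symm]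
      linarith [abs_sub (localDisc ξ x a b N) (b - a), hx N]
  have hB := abs_birkhoffSum_le_two_mul hξ (discrepancySummand_periodic a b)
    (eventually_nhdsGT_discrepancySummand_eq a b) hxS
  set ψ := fun y => limsup (fun n => birkhoffSum (· + ξ) g n y) atTop
  have hψm : Measurable ψ :=
    .limsup fun n => (measurable_add_const ξ).birkhoffSum (measurable_discrepancySummand a b) n
  have hψp : Periodic ψ 1 := fun y => congrArg (limsup · atTop)
    (funext fun n => (discrepancySummand_periodic a b).birkhoffSum_add_right ξ n y)
  have hψ (y : ℝ) : (ψ (y + ξ) : AddCircle (1 : ℝ)) = ψ y + (b - a : ℝ) := by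
    rw [show ψ y = g y + ψ (y + ξ) from limsup_birkhoffSum_eq_add _ g y (hB · (y + ξ)), coe_add,
      coe_discrepancySummand]
    abel
  obtain ⟨k, m, h⟩ := exists_int_eq_of_coe_comp_add_eq hψm hψp hψ
  exact ⟨k, m, by simpa using h⟩

/-- Kesten's theorem (converse direction, Erdős–Szüsz conjecture): if for some
starting point `x` the local discrepancy is uniformly bounded, then the length of
the interval is congruent to `kξ` mod ℤ for some integer `k`. -/
theorem kesten (ξ a b : ℝ) (hξ : Irrational ξ)
    (ha : 0 ≤ a) (hab : a ≤ b) (hb : b ≤ 1)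
    (hbd : ∃ C : ℝ, 0 < C ∧ ∃ x : ℝ, ∀ N : ℕ, |localDisc ξ x a b N| < C) :
    ∃ k m : ℤ, b - a = k * ξ + m :=
  kesten_general ξ a b hξ hbd
end

section
/- Let ξ be irrational, and let I₁,…,I_L ⊂ ℝ/ℤ be disjoint intervals with I_ℓ = [a_ℓ, b_ℓ]. If there exists a permutation σ of {1,…,L} and integers k_ℓ such that b_{σ(ℓ)} − a_ℓ ≡ k_ℓ ξ mod ℤ for all ℓ, then the sum D(N; I₁) + ⋯ + D(N; I_L) of local discrepancies is bounded uniformly in N. -/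
open scoped Classical

/-!
The indicator of `[a, b)` evaluated at `{y}` equals `{y - b} - {y - a} + (b - a)`, so the
discrepancy of `[a, b)` is `S(b) - S(a) + (b - a)`, where
`S(c) = ∑_{n ≤ N} {x + nξ - c}` is a sum of sawtooth values along the orbit. Shifting `c`
by `kξ + m` shifts the summation index by `k`, which changes `S` by at most `|k|` since every
summand lies in `[0, 1)`. When the right endpoints are a permutation of the left endpoints
shifted in this way, the sums `S` cancel in pairs up to `∑ |k_ℓ|`.
-/

open Finset

lemma Int.fract_sub_eq_ite {y c : ℝ} (hc₀ : 0 ≤ c) (hc₁ : c ≤ 1) :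
    Int.fract (y - c) = Int.fract y - c + if Int.fract y < c then 1 else 0 := by
  have hy₀ := Int.fract_nonneg y
  have hy₁ := Int.fract_lt_one y
  have hsplit : y - c = (⌊y⌋ : ℝ) + (Int.fract y - c) := by rw [Int.fract]; ring
  rw [hsplit, Int.fract_intCast_add]
  split_ifs with h
  · rw [← Int.fract_add_one, Int.fract_eq_self.mpr ⟨by linarith, by linarith⟩]
  · rw [Int.fract_eq_self.mpr ⟨by linarith, by linarith⟩, add_zero]

lemma ite_fract_mem_Ico_eq {y a b : ℝ} (ha : 0 ≤ a) (hab : a ≤ b) (hb : b ≤ 1) :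
    (if Int.fract y ∈ Set.Ico a b then (1 : ℝ) else 0)
      = Int.fract (y - b) - Int.fract (y - a) + (b - a) := by
  rw [Int.fract_sub_eq_ite ha (hab.trans hb), Int.fract_sub_eq_ite (ha.trans hab) hb]
  simp only [Set.mem_Ico]
  split_ifs <;> grind

noncomputable def orbitSawtoothSum (ξ x c : ℝ) (N : ℕ) : ℝ :=
  ∑ n ∈ range (N + 1), Int.fract (x + n * ξ - c)

lemma localDisc_eq_orbitSawtoothSum_sub {ξ x a b : ℝ} (ha : 0 ≤ a) (hab : a ≤ b) (hb : b ≤ 1)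
    (N : ℕ) :
    localDisc ξ x a b N = orbitSawtoothSum ξ x b N - orbitSawtoothSum ξ x a N + (b - a) := by
  -- `n` is elaborated as a real in `localDisc`, so `range (N + 1)` is coerced to its image in `ℝ`
  rw [localDisc, natCast_card_filter]
  simp only [bind_def, pure_def, sup_singleton_apply]
  rw [sum_image fun _ _ _ _ h => Nat.cast_injective h,
    sum_congr rfl fun (n : ℕ) _ => ite_fract_mem_Ico_eq (y := x + n * ξ) ha hab hb,
    sum_add_distrib, sum_sub_distrib, sum_const, card_range, orbitSawtoothSum,
    orbitSawtoothSum, nsmul_eq_mul]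
  push_cast
  ring

lemma abs_sub_le_abs_of_abs_succ_sub_le_one {S : ℤ → ℝ} (h : ∀ k, |S (k + 1) - S k| ≤ 1)
    (k : ℤ) : |S k - S 0| ≤ |(k : ℝ)| := by
  induction k using Int.induction_on with
  | zero => simp
  | succ i ih =>
    calc |S (i + 1) - S 0| ≤ |S (i + 1) - S i| + |S i - S 0| := abs_sub_le _ _ _
      _ ≤ 1 + i := by simpa using add_le_add (h i) ih
      _ = |((i + 1 : ℤ) : ℝ)| := by push_cast; rw [abs_of_nonneg (by positivity), add_comm]
  | pred i ih =>
    have hstep : |S (-i) - S (-i - 1)| ≤ 1 := by simpa using h (-i - 1)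
    calc |S (-i - 1) - S 0| ≤ |S (-i - 1) - S (-i)| + |S (-i) - S 0| := abs_sub_le _ _ _
      _ ≤ 1 + i := by
        rw [abs_sub_comm]; simpa using add_le_add hstep ih
      _ = |((-i - 1 : ℤ) : ℝ)| := by
        push_cast; rw [← abs_neg, abs_of_nonneg (by linarith [(Nat.cast_nonneg i : (0:ℝ) ≤ i)])]
        ring

lemma abs_sum_range_sub_succ_sub_le_one {F : ℤ → ℝ} (hF : ∀ j, F j ∈ Set.Ico 0 1) (M : ℕ)
    (k : ℤ) : |∑ n ∈ range M, F (n - (k + 1)) - ∑ n ∈ range M, F (n - k)| ≤ 1 := by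
  cases M with
  | zero => simp
  | succ M =>
    rw [sum_range_succ', sum_range_succ]
    have hshift : ∀ n : ℕ, F ((n + 1 : ℕ) - (k + 1)) = F (n - k) := fun n => by
      congr 1; push_cast; ring
    simp only [hshift, Nat.cast_zero, zero_sub]
    have h₁ := hF (-(k + 1))
    have h₂ := hF (M - k)
    rw [abs_le]
    constructor <;> linarith [h₁.1, h₁.2, h₂.1, h₂.2]

lemma abs_sum_range_sub_sub_le {F : ℤ → ℝ} (hF : ∀ j, F j ∈ Set.Ico 0 1) (M : ℕ) (k : ℤ) :
    |∑ n ∈ range M, F (n - k) - ∑ n ∈ range M, F n| ≤ |(k : ℝ)| := by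
  simpa using abs_sub_le_abs_of_abs_succ_sub_le_one
    (S := fun k => ∑ n ∈ range M, F (n - k)) (abs_sum_range_sub_succ_sub_le_one hF M) k

lemma abs_orbitSawtoothSum_add_sub_le (ξ x c : ℝ) (N : ℕ) (k m : ℤ) :
    |orbitSawtoothSum ξ x (c + k * ξ + m) N - orbitSawtoothSum ξ x c N| ≤ |(k : ℝ)| := by
  have hshift : ∀ n : ℕ,
      Int.fract (x + n * ξ - (c + k * ξ + m)) = Int.fract (x + ((n - k : ℤ) : ℝ) * ξ - c) :=
    fun n => by
      rw [← Int.fract_sub_intCast (x + ((n - k : ℤ) : ℝ) * ξ - c) m]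
      push_cast; ring_nf
  simpa [orbitSawtoothSum, hshift] using abs_sum_range_sub_sub_le
    (F := fun j : ℤ => Int.fract (x + j * ξ - c))
    (fun j => ⟨Int.fract_nonneg _, Int.fract_lt_one _⟩) (N + 1) k

theorem oren_sufficiency_general (ξ x : ℝ) (L : ℕ) (a b : Fin L → ℝ)
    (ha : ∀ ℓ, 0 ≤ a ℓ) (hab : ∀ ℓ, a ℓ ≤ b ℓ) (hb : ∀ ℓ, b ℓ ≤ 1)
    (hσ : ∃ σ : Equiv.Perm (Fin L), ∀ ℓ, ∃ k m : ℤ, b (σ ℓ) - a ℓ = k * ξ + m) :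
    ∃ C : ℝ, 0 < C ∧ ∀ N : ℕ, |∑ ℓ, localDisc ξ x (a ℓ) (b ℓ) N| < C := by
  obtain ⟨σ, hσ⟩ := hσ
  choose k m hkm using hσ
  have hlen : 0 ≤ ∑ ℓ, (b ℓ - a ℓ) := sum_nonneg fun ℓ _ => sub_nonneg.2 (hab ℓ)
  refine ⟨∑ ℓ, |(k ℓ : ℝ)| + ∑ ℓ, (b ℓ - a ℓ) + 1, by positivity, fun N => ?_⟩
  set S := fun c => orbitSawtoothSum ξ x c N
  have hsum : ∑ ℓ, localDisc ξ x (a ℓ) (b ℓ) N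
      = ∑ ℓ, (S (b (σ ℓ)) - S (a ℓ)) + ∑ ℓ, (b ℓ - a ℓ) := by
    simp only [localDisc_eq_orbitSawtoothSum_sub (ha _) (hab _) (hb _), sum_add_distrib,
      sum_sub_distrib, Equiv.sum_comp σ (fun ℓ => S (b ℓ)), S]
  have hshift : |∑ ℓ, (S (b (σ ℓ)) - S (a ℓ))| ≤ ∑ ℓ, |(k ℓ : ℝ)| := by
    refine (abs_sum_le_sum_abs _ _).trans (sum_le_sum fun ℓ _ => ?_)
    rw [show b (σ ℓ) = a ℓ + k ℓ * ξ + m ℓ by linarith [hkm ℓ]]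
    exact abs_orbitSawtoothSum_add_sub_le ξ x (a ℓ) N (k ℓ) (m ℓ)
  rw [hsum]
  calc _ ≤ |∑ ℓ, (S (b (σ ℓ)) - S (a ℓ))| + |∑ ℓ, (b ℓ - a ℓ)| := abs_add_le _ _
    _ < _ := by rw [abs_of_nonneg hlen]; linarith

/-- Oren's theorem, sufficiency direction: if there is a permutation `σ` and
integers `k ℓ` with `b (σ ℓ) - a ℓ ≡ (k ℓ) ξ (mod ℤ)` for all `ℓ`, then the sum
of the local discrepancies of the disjoint intervals `[a ℓ, b ℓ)` is bounded. -/
theorem oren_sufficiency (ξ x : ℝ) (hξ : Irrational ξ) (L : ℕ) (a b : Fin L → ℝ)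
    (ha : ∀ ℓ, 0 ≤ a ℓ) (hab : ∀ ℓ, a ℓ ≤ b ℓ) (hb : ∀ ℓ, b ℓ ≤ 1)
    (hdisj : Pairwise (fun ℓ ℓ' => Disjoint (Set.Ico (a ℓ) (b ℓ)) (Set.Ico (a ℓ') (b ℓ'))))
    (hσ : ∃ σ : Equiv.Perm (Fin L), ∀ ℓ, ∃ k m : ℤ, b (σ ℓ) - a ℓ = k * ξ + m) :
    ∃ C : ℝ, 0 < C ∧ ∀ N : ℕ, |∑ ℓ, localDisc ξ x (a ℓ) (b ℓ) N| < C :=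
  oren_sufficiency_general ξ x L a b ha hab hb hσ
end

section
/- Let Y ⊂ ℝ be a discrete set and δ > 0. Then Y is bounded-displacement equivalent to a lattice of covolume δ⁻¹ (i.e., to δ⁻¹ℤ) if and only if there exists c > 0 such that for every finite interval I ⊂ ℝ, |#(I ∩ Y) − δ·Length(I)| < c. -/
/-- Two subsets of ℝ are bounded-displacement (BD) equivalent if there is a
bijection between them moving every point a uniformly bounded distance. -/
def BDEquiv (Y₁ Y₂ : Set ℝ) : Prop :=
  ∃ φ : Y₁ ≃ Y₂, ∃ M : ℝ, ∀ y : Y₁, |(y : ℝ) - (φ y : ℝ)| ≤ M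

/-!
A bijection moving points by at most `M` maps `Y ∩ [s, t]` into `δ⁻¹ℤ ∩ [s - M, t + M]`, and its
inverse maps `δ⁻¹ℤ ∩ [s + M, t - M]` into `Y ∩ [s, t]`; so the discrepancy of `Y` exceeds that of
the lattice (at most `1`) by at most `2δM`.

Conversely, bounded discrepancy `c` forces `Y` to meet every interval of length `c / δ`, so the
locally finite set `Y` has neither a least nor a greatest element and is order-isomorphic to `ℤ`
via some `e`. Counting `Y ∩ [a, b]` through `e` gives `|e b - e a - δ (b - a)| ≤ c + 1`, hence
`y ↦ δ⁻¹ e y` is a bijection onto `δ⁻¹ℤ` of bounded displacement.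
-/

open Set

def latticeOfDensity (δ : ℝ) : Set ℝ := {x | ∃ n : ℤ, x = δ⁻¹ * n}

section Lattice

variable {δ : ℝ}

theorem latticeOfDensity_inter_Icc (hδ : 0 < δ) (a b : ℝ) :
    latticeOfDensity δ ∩ Icc a b = (fun n : ℤ => δ⁻¹ * n) '' Icc ⌈δ * a⌉ ⌊δ * b⌋ := by
  ext x
  simp only [latticeOfDensity, mem_inter_iff, mem_ofPred_eq, mem_Icc, mem_image,
    Int.ceil_le, Int.le_floor]
  constructor
  · rintro ⟨⟨n, rfl⟩, ha, hb⟩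
    exact ⟨n, ⟨(le_inv_mul_iff₀ hδ).1 ha, (inv_mul_le_iff₀ hδ).1 hb⟩, rfl⟩
  · rintro ⟨n, ⟨ha, hb⟩, rfl⟩
    exact ⟨⟨n, rfl⟩, (le_inv_mul_iff₀ hδ).2 ha, (inv_mul_le_iff₀ hδ).2 hb⟩

theorem latticeOfDensity_inter_Icc_finite (hδ : 0 < δ) (a b : ℝ) :
    (latticeOfDensity δ ∩ Icc a b).Finite := by
  rw [latticeOfDensity_inter_Icc hδ]
  exact (finite_Icc _ _).image _

theorem ncard_latticeOfDensity_inter_Icc (hδ : 0 < δ) (a b : ℝ) :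
    (latticeOfDensity δ ∩ Icc a b).ncard = (⌊δ * b⌋ + 1 - ⌈δ * a⌉).toNat := by
  have hinj : Function.Injective (fun n : ℤ => δ⁻¹ * n) := fun m n h => by
    simpa [hδ.ne'] using h
  rw [latticeOfDensity_inter_Icc hδ, ncard_image_of_injective _ hinj, ← Finset.coe_Icc,
    ncard_coe_finset, Int.card_Icc]

theorem abs_ncard_latticeOfDensity_inter_Icc_sub_le (hδ : 0 < δ) {a b : ℝ} (hab : a ≤ b) :
    |((latticeOfDensity δ ∩ Icc a b).ncard : ℝ) - δ * (b - a)| ≤ 1 := by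
  rw [ncard_latticeOfDensity_inter_Icc hδ, abs_le]
  have hfloor := Int.floor_le (δ * b)
  have hfloor' := Int.sub_one_lt_floor (δ * b)
  have hceil := Int.le_ceil (δ * a)
  have hceil' := Int.ceil_lt_add_one (δ * a)
  have hlen : 0 ≤ δ * (b - a) := mul_nonneg hδ.le (sub_nonneg.2 hab)
  rcases le_or_gt (⌊δ * b⌋ + 1 - ⌈δ * a⌉) 0 with h | h
  · have h' : (⌊δ * b⌋ : ℝ) + 1 - ⌈δ * a⌉ ≤ 0 := by exact_mod_cast h
    rw [Int.toNat_of_nonpos h, Nat.cast_zero]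
    constructor <;> nlinarith
  · have hcast : ((⌊δ * b⌋ + 1 - ⌈δ * a⌉).toNat : ℝ) = ⌊δ * b⌋ + 1 - ⌈δ * a⌉ := by
      exact_mod_cast Int.toNat_of_nonneg h.le
    rw [hcast]
    constructor <;> nlinarith

end Lattice

section Displacement

variable {A B : Set ℝ} {M : ℝ}

theorem ncard_inter_Icc_le_of_displacement (φ : A ≃ B) (hφ : ∀ a : A, |(a : ℝ) - φ a| ≤ M)
    {s t : ℝ} (hB : (B ∩ Icc (s - M) (t + M)).Finite) :
    (A ∩ Icc s t).ncard ≤ (B ∩ Icc (s - M) (t + M)).ncard := by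
  classical
  let f : ℝ → ℝ := fun x => if hx : x ∈ A then φ ⟨x, hx⟩ else x
  refine ncard_le_ncard_of_injOn f ?_ ?_ hB
  · rintro x ⟨hx, hsx, hxt⟩
    have := abs_le.1 (hφ ⟨x, hx⟩)
    simp only [f, dif_pos hx]
    exact ⟨(φ _).2, by linarith, by linarith⟩
  · rintro x ⟨hx, -⟩ y ⟨hy, -⟩ hxy
    simp only [f, dif_pos hx, dif_pos hy] at hxy
    simpa using φ.injective (Subtype.ext hxy)

theorem abs_ncard_inter_Icc_sub_le_of_displacement {δ C : ℝ} (hδ : 0 ≤ δ) (hC : 0 ≤ C)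
    (hM : 0 ≤ M) (φ : A ≃ B) (hφ : ∀ a : A, |(a : ℝ) - φ a| ≤ M)
    (hA : ∀ s t, (A ∩ Icc s t).Finite) (hB : ∀ s t, (B ∩ Icc s t).Finite)
    (hBdisc : ∀ s t, s ≤ t → |((B ∩ Icc s t).ncard : ℝ) - δ * (t - s)| ≤ C)
    {s t : ℝ} (hst : s ≤ t) :
    |((A ∩ Icc s t).ncard : ℝ) - δ * (t - s)| ≤ C + 2 * δ * M := by
  have hφsymm : ∀ b : B, |(b : ℝ) - φ.symm b| ≤ M := fun b => by
    simpa [abs_sub_comm] using hφ (φ.symm b)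
  have hupper : ((A ∩ Icc s t).ncard : ℝ) ≤ δ * (t - s) + C + 2 * δ * M := by
    have hcard : ((A ∩ Icc s t).ncard : ℝ) ≤ (B ∩ Icc (s - M) (t + M)).ncard := by
      exact_mod_cast ncard_inter_Icc_le_of_displacement φ hφ (hB _ _)
    have := abs_le.1 (hBdisc (s - M) (t + M) (by linarith))
    linarith
  have hlower : δ * (t - s) - C - 2 * δ * M ≤ (A ∩ Icc s t).ncard := by
    rcases le_or_gt (2 * M) (t - s) with hlong | hshort
    · have hcard : ((B ∩ Icc (s + M) (t - M)).ncard : ℝ) ≤ (A ∩ Icc s t).ncard := by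
        have := ncard_inter_Icc_le_of_displacement φ.symm hφsymm (s := s + M) (t := t - M)
        rw [add_sub_cancel_right, sub_add_cancel] at this
        exact_mod_cast this (hA s t)
      have := abs_le.1 (hBdisc (s + M) (t - M) (by linarith))
      linarith
    · have : δ * (t - s) ≤ 2 * δ * M := by nlinarith
      have : (0 : ℝ) ≤ (A ∩ Icc s t).ncard := Nat.cast_nonneg _
      linarith
  exact abs_le.2 ⟨by linarith, by linarith⟩

end Displacement

section OrderIsoInt

variable {Y : Set ℝ}

theorem exists_mem_Icc_of_discrepancy_lt {δ c : ℝ} (hδ : 0 < δ)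
    (hdisc : ∀ s t, s ≤ t → |((Y ∩ Icc s t).ncard : ℝ) - δ * (t - s)| < c) (a : ℝ) :
    ∃ y ∈ Y, a ≤ y ∧ y ≤ a + c / δ := by
  have hc : 0 < c := (abs_nonneg _).trans_lt (hdisc 0 0 le_rfl)
  have hlen : δ * (a + c / δ - a) = c := by field_simp; ring
  have hpos : 0 < (Y ∩ Icc a (a + c / δ)).ncard := by
    have := (abs_lt.1 (hdisc a (a + c / δ) (le_add_of_nonneg_right (by positivity)))).1
    have : (0 : ℝ) < (Y ∩ Icc a (a + c / δ)).ncard := by linarith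
    exact_mod_cast this
  exact nonempty_of_ncard_ne_zero hpos.ne'

theorem nonempty_orderIso_int_of_locallyFinite (hY : ∀ s t, (Y ∩ Icc s t).Finite)
    (hmax : ∀ a, ∃ y ∈ Y, a < y) (hmin : ∀ a, ∃ y ∈ Y, y < a) : Nonempty (Y ≃o ℤ) := by
  let _ : LocallyFiniteOrder Y := .ofFiniteIcc fun a b => by
    refine Finite.of_finite_image ?_ Subtype.val_injective.injOn
    rw [← preimage_subtype_val_Icc, Subtype.image_preimage_coe]
    exact hY a b
  let _ := LinearLocallyFiniteOrder.succOrder (ι := Y)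
  let _ := LinearLocallyFiniteOrder.predOrder (ι := Y)
  have : NoMaxOrder Y := ⟨fun a => let ⟨y, hy, h⟩ := hmax a; ⟨⟨y, hy⟩, h⟩⟩
  have : NoMinOrder Y := ⟨fun a => let ⟨y, hy, h⟩ := hmin a; ⟨⟨y, hy⟩, h⟩⟩
  have : Nonempty Y := let ⟨y, hy, _⟩ := hmax 0; ⟨⟨y, hy⟩⟩
  exact ⟨orderIsoIntOfLinearSuccPredArch⟩

theorem ncard_inter_Icc_eq_of_orderIso_int (e : Y ≃o ℤ) {a b : Y} (hab : a ≤ b) :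
    ((Y ∩ Icc (a : ℝ) b).ncard : ℤ) = e b - e a + 1 := by
  rw [← Subtype.image_preimage_coe, preimage_subtype_val_Icc,
    ncard_image_of_injective _ Subtype.val_injective, ← ncard_image_of_injective _ e.injective,
    e.image_Icc, ← Finset.coe_Icc, ncard_coe_finset, Int.card_Icc,
    Int.toNat_of_nonneg (by linarith [e.monotone hab])]
  ring

theorem abs_orderIso_int_sub_le {δ c : ℝ} (e : Y ≃o ℤ)
    (hdisc : ∀ s t, s ≤ t → |((Y ∩ Icc s t).ncard : ℝ) - δ * (t - s)| < c) (a b : Y) :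
    |((e b - e a : ℤ) : ℝ) - δ * (b - a)| ≤ c + 1 := by
  wlog hab : a ≤ b generalizing a b
  · rw [← abs_neg]
    convert this b a (le_of_not_ge hab) using 2
    push_cast
    ring
  have hcard : ((Y ∩ Icc (a : ℝ) b).ncard : ℝ) = ((e b - e a + 1 : ℤ) : ℝ) := by
    exact_mod_cast ncard_inter_Icc_eq_of_orderIso_int e hab
  have := hdisc a b hab
  rw [hcard] at this
  push_cast at this ⊢
  rw [abs_lt] at this
  rw [abs_le]
  constructor <;> linarith

end OrderIsoInt

noncomputable def intEquivLatticeOfDensity {δ : ℝ} (hδ : δ ≠ 0) : ℤ ≃ latticeOfDensity δ :=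
  .ofBijective (fun n => ⟨δ⁻¹ * n, n, rfl⟩)
    ⟨fun m n h => by simpa [hδ] using congrArg Subtype.val h,
     fun ⟨_, n, hn⟩ => ⟨n, Subtype.ext hn.symm⟩⟩

@[simp]
theorem coe_intEquivLatticeOfDensity {δ : ℝ} (hδ : δ ≠ 0) (n : ℤ) :
    (intEquivLatticeOfDensity hδ n : ℝ) = δ⁻¹ * n :=
  rfl

theorem bdEquiv_latticeOfDensity_of_equiv_int {Y : Set ℝ} {δ M : ℝ} (hδ : 0 < δ) (f : Y ≃ ℤ)
    (hf : ∀ y : Y, |δ * y - f y| ≤ M) : BDEquiv Y (latticeOfDensity δ) := by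
  refine ⟨f.trans (intEquivLatticeOfDensity hδ.ne'), δ⁻¹ * M, fun y => ?_⟩
  have hfactor : (y : ℝ) - δ⁻¹ * f y = δ⁻¹ * (δ * y - f y) := by field_simp
  rw [Equiv.trans_apply, coe_intEquivLatticeOfDensity, hfactor, abs_mul, abs_of_pos (inv_pos.2 hδ)]
  exact mul_le_mul_of_nonneg_left (hf y) (inv_pos.2 hδ).le

/-- Laczkovich's theorem in dimension one: a discrete (locally finite) set
`Y ⊆ ℝ` is BD-equivalent to the lattice `δ⁻¹ℤ` of covolume `δ⁻¹` if and only if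
its discrepancy `|#(I ∩ Y) − δ·Length I|` is uniformly bounded over all finite
intervals `I`. -/
theorem laczkovich_dim_one (Y : Set ℝ) (δ : ℝ) (hδ : 0 < δ)
    (hY : ∀ s t : ℝ, (Y ∩ Set.Icc s t).Finite) :
    BDEquiv Y {x : ℝ | ∃ n : ℤ, x = δ⁻¹ * n} ↔
      ∃ c : ℝ, 0 < c ∧ ∀ s t : ℝ, s ≤ t →
        |(Nat.card ↥(Y ∩ Set.Icc s t) : ℝ) - δ * (t - s)| < c := by
  change BDEquiv Y (latticeOfDensity δ) ↔ _
  simp only [Nat.card_coe_set_eq]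
  constructor
  · rintro ⟨φ, M, hφ⟩
    refine ⟨2 * δ * |M| + 2, by positivity, fun s t hst => ?_⟩
    have := abs_ncard_inter_Icc_sub_le_of_displacement hδ.le zero_le_one (abs_nonneg M) φ
      (fun y => (hφ y).trans (le_abs_self M)) hY (latticeOfDensity_inter_Icc_finite hδ)
      (fun _ _ => abs_ncard_latticeOfDensity_inter_Icc_sub_le hδ) hst
    linarith
  · rintro ⟨c, -, hdisc⟩
    have hbetween := exists_mem_Icc_of_discrepancy_lt hδ hdisc
    obtain ⟨e⟩ := nonempty_orderIso_int_of_locallyFinite hY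
      (fun a => let ⟨y, hy, hay, _⟩ := hbetween (a + 1); ⟨y, hy, by linarith⟩)
      (fun a => let ⟨y, hy, _, hya⟩ := hbetween (a - 1 - c / δ); ⟨y, hy, by linarith⟩)
    set y₀ := e.symm 0
    refine bdEquiv_latticeOfDensity_of_equiv_int hδ e.toEquiv (M := |δ * y₀| + (c + 1))
      fun y => ?_
    have hy := abs_orderIso_int_sub_le e hdisc y₀ y
    rw [e.apply_symm_apply, sub_zero] at hy
    calc |δ * y - e y| = |δ * y₀ - ((e y : ℝ) - δ * (y - y₀))| := by ring_nf
      _ ≤ |δ * y₀| + |(e y : ℝ) - δ * (y - y₀)| := abs_sub _ _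
      _ ≤ |δ * y₀| + (c + 1) := by gcongr
end

section
/- Let Y ⊂ ℝ be discrete. If there exists δ > 0 and c > 0 such that |#(I ∩ Y) − δ·Length(I)| < c for all finite intervals I, then the bijection φ: Y → δ⁻¹ℤ given by sending the n-th smallest point of Y in [0,∞) to δ⁻¹n (and symmetrically for negative points) has bounded displacement: sup_{y∈Y} |y − φ(y)| < ∞. -/
/-!
Since `e` is an order isomorphism, `Y ∩ [e m, e n]` is exactly `{e m, …, e n}`, so the
discrepancy bound says that `δ (e n - e m)` is within `c + 1` of `n - m`. Dividing by `δ`,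
`e n` stays within `δ⁻¹ (c + 1) + |e 0|` of `δ⁻¹ n`.
-/

theorem Int.natCard_Icc (m n : ℤ) : Nat.card (Set.Icc m n) = (n + 1 - m).toNat := by
  rw [Nat.card_coe_set_eq, ← Finset.coe_Icc, Set.ncard_coe_finset, Int.card_Icc]

theorem inter_Icc_eq_image_Icc_of_orderIso {α : Type*} [Preorder α] {Y : Set α} (e : ℤ ≃o Y)
    (m n : ℤ) : Y ∩ Set.Icc (e m : α) (e n) = (fun k ↦ (e k : α)) '' Set.Icc m n := by
  rw [← Subtype.image_preimage_coe, Set.preimage_subtype_val_Icc, ← e.image_Icc, Set.image_image]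

theorem natCard_inter_Icc_of_orderIso {α : Type*} [Preorder α] {Y : Set α} (e : ℤ ≃o Y)
    {m n : ℤ} (hmn : m ≤ n) : (Nat.card ↥(Y ∩ Set.Icc (e m : α) (e n)) : ℤ) = n - m + 1 := by
  have hinj : Function.Injective (fun k ↦ (e k : α)) :=
    Subtype.val_injective.comp e.injective
  rw [inter_Icc_eq_image_Icc_of_orderIso, Nat.card_image_of_injective hinj, Int.natCard_Icc,
    Int.toNat_of_nonneg (by omega)]
  ring

theorem abs_mul_sub_sub_le_of_discrepancy_lt {Y : Set ℝ} {δ c : ℝ}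
    (hdisc : ∀ s t : ℝ, s ≤ t → |(Nat.card ↥(Y ∩ Set.Icc s t) : ℝ) - δ * (t - s)| < c)
    (e : ℤ ≃o Y) (m n : ℤ) : |δ * ((e n : ℝ) - e m) - (n - m)| ≤ c + 1 := by
  wlog hmn : m ≤ n generalizing m n
  · calc |δ * ((e n : ℝ) - e m) - (n - m)| = |δ * ((e m : ℝ) - e n) - (m - n)| := by
          rw [← abs_neg]; ring_nf
      _ ≤ c + 1 := this n m (by omega)
  have h := hdisc _ _ (e.monotone hmn)
  have hcard : (Nat.card ↥(Y ∩ Set.Icc (e m : ℝ) (e n)) : ℝ) = n - m + 1 := by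
    exact_mod_cast natCard_inter_Icc_of_orderIso e hmn
  rw [hcard] at h
  rw [abs_le]
  constructor <;> linarith [abs_lt.mp h]

theorem laczkovich_explicit_general (Y : Set ℝ) (δ c : ℝ) (hδ : 0 < δ)
    (hdisc : ∀ s t : ℝ, s ≤ t →
      |(Nat.card ↥(Y ∩ Set.Icc s t) : ℝ) - δ * (t - s)| < c)
    (e : ℤ ≃o Y) :
    ∃ M : ℝ, ∀ n : ℤ, |(e n : ℝ) - δ⁻¹ * n| ≤ M := by
  refine ⟨δ⁻¹ * (c + 1) + |(e 0 : ℝ)|, fun n ↦ ?_⟩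
  have hkey := abs_mul_sub_sub_le_of_discrepancy_lt hdisc e 0 n
  push_cast at hkey
  rw [sub_zero] at hkey
  calc |(e n : ℝ) - δ⁻¹ * n| = |δ⁻¹ * (δ * ((e n : ℝ) - e 0) - n) + e 0| := by
        field_simp; ring_nf
    _ ≤ δ⁻¹ * |δ * ((e n : ℝ) - e 0) - n| + |(e 0 : ℝ)| := by
        grw [abs_add_le, abs_mul, abs_of_pos (inv_pos.mpr hδ)]
    _ ≤ δ⁻¹ * (c + 1) + |(e 0 : ℝ)| := by gcongr

/-- Explicit direction of Laczkovich's one-dimensional theorem: if a discrete set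
`Y ⊆ ℝ`, unbounded in both directions, has discrepancy uniformly bounded by `c`
with respect to the density `δ`, then the order-preserving enumeration
`e : ℤ ≃o Y` (normalized so that `e 0` is the smallest point of `Y` in `[0,∞)`)
satisfies `sup_n |e n − δ⁻¹ n| < ∞`; i.e. the bijection matching the `n`-th point
of `Y` with `δ⁻¹ n` has bounded displacement. -/
theorem laczkovich_explicit (Y : Set ℝ) (δ c : ℝ) (hδ : 0 < δ) (hc : 0 < c)
    (hfin : ∀ s t : ℝ, (Y ∩ Set.Icc s t).Finite)
    (hunbdd_above : ∀ R : ℝ, ∃ y ∈ Y, R < y)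
    (hunbdd_below : ∀ R : ℝ, ∃ y ∈ Y, y < R)
    (hdisc : ∀ s t : ℝ, s ≤ t →
      |(Nat.card ↥(Y ∩ Set.Icc s t) : ℝ) - δ * (t - s)| < c)
    (e : ℤ ≃o Y) (he0 : 0 ≤ (e 0 : ℝ)) (heneg : ((e (-1) : ℝ)) < 0) :
    ∃ M : ℝ, ∀ n : ℤ, |(e n : ℝ) - δ⁻¹ * n| ≤ M :=
  laczkovich_explicit_general Y δ c hδ hdisc e
end

section
/- For irrational ξ, the set Z_k = {t ∈ ℤ : frac(ξt) ∈ [0, frac(kξ))} (where frac denotes fractional part and k a positive integer) is BD-equivalent to the lattice frac(kξ)⁻¹ ℤ. -/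
open Finset Filter

theorem Int.floor_sub_floor_sub {R : Type*} [Field R] [LinearOrder R] [IsStrictOrderedRing R]
    [FloorRing R] (x y : R) :
    ⌊x⌋ - ⌊x - y⌋ = ⌊y⌋ + if Int.fract x < Int.fract y then 1 else 0 := by
  have hsplit : x - y = (Int.fract x - Int.fract y) + ((⌊x⌋ - ⌊y⌋ : ℤ) : R) := by
    unfold Int.fract; push_cast; ring
  rw [hsplit, Int.floor_add_intCast]
  have hx₀ := Int.fract_nonneg x
  have hy₀ := Int.fract_nonneg y
  have hx₁ := Int.fract_lt_one x
  have hy₁ := Int.fract_lt_one y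
  split_ifs with h
  · have : ⌊Int.fract x - Int.fract y⌋ = -1 :=
      Int.floor_eq_iff.2 ⟨by push_cast; linarith, by push_cast; linarith⟩
    omega
  · have : ⌊Int.fract x - Int.fract y⌋ = 0 :=
      Int.floor_eq_zero_iff.2 ⟨by linarith [not_lt.1 h], by linarith⟩
    omega

noncomputable def latticeEquiv {α : ℝ} (hα : α ≠ 0) : ℤ ≃ {x : ℝ | ∃ n : ℤ, x = α⁻¹ * n} :=
  Equiv.ofBijective (fun n => ⟨α⁻¹ * n, n, rfl⟩)
    ⟨fun m n h => by simpa [hα] using congrArg Subtype.val h,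
      fun ⟨_, n, hn⟩ => ⟨n, Subtype.ext hn.symm⟩⟩

theorem bdEquiv_image_intCast_of_bijOn {Z : Set ℤ} {G : ℤ → ℤ} {α C : ℝ} (hα : α ≠ 0)
    (hG : Set.BijOn G Z Set.univ) (hbound : ∀ t ∈ Z, |(G t : ℝ) - t * α| ≤ C) :
    BDEquiv ((↑) '' Z) {x | ∃ n : ℤ, x = α⁻¹ * n} := by
  refine ⟨(Equiv.Set.image _ Z Int.cast_injective).symm.trans <|
    (hG.equiv G).trans <| (Equiv.Set.univ ℤ).trans (latticeEquiv hα), |α|⁻¹ * C, ?_⟩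
  rintro ⟨_, t, ht, rfl⟩
  have himage : (Equiv.Set.image _ Z Int.cast_injective).symm ⟨(t : ℝ), t, ht, rfl⟩ = ⟨t, ht⟩ :=
    (Equiv.Set.image _ Z Int.cast_injective).symm_apply_apply ⟨t, ht⟩
  simp only [Equiv.trans_apply, himage]
  calc |(t : ℝ) - α⁻¹ * G t| = |α|⁻¹ * |(G t : ℝ) - t * α| := by
        rw [← abs_inv, ← abs_mul, abs_sub_comm]
        congr 1
        field_simp
    _ ≤ |α|⁻¹ * C := by gcongr; exact hbound t ht

section CountingFunction

variable {Z : Set ℤ} [DecidablePred (· ∈ Z)] {G : ℤ → ℤ}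

theorem monotone_of_step (hstep : ∀ t, G (t + 1) = G t + if t ∈ Z then 1 else 0) :
    Monotone G :=
  monotone_int_of_le_succ fun t => by rw [hstep]; split_ifs <;> omega

theorem strictMonoOn_of_step (hstep : ∀ t, G (t + 1) = G t + if t ∈ Z then 1 else 0) :
    StrictMonoOn G Z := by
  intro t ht t' _ htt'
  have hsucc : G (t + 1) = G t + 1 := by rw [hstep, if_pos ht]
  have := monotone_of_step hstep (show t + 1 ≤ t' by omega)
  omega

theorem surjOn_of_step (hstep : ∀ t, G (t + 1) = G t + if t ∈ Z then 1 else 0)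
    (htop : Tendsto G atTop atTop) (hbot : Tendsto G atBot atBot) :
    Set.SurjOn G Z Set.univ := by
  intro m _
  obtain ⟨t₁, ht₁⟩ := (htop.eventually_gt_atTop m).exists
  have hbdd : ∃ b, ∀ t, G t ≤ m → t ≤ b :=
    ⟨t₁, fun t ht => (monotone_of_step hstep).reflect_lt (ht.trans_lt ht₁) |>.le⟩
  obtain ⟨t, hle, hmax⟩ := Int.exists_greatest_of_bdd hbdd (hbot.eventually_le_atBot m).exists
  have hgt : m < G (t + 1) := not_le.1 fun h => by linarith [hmax _ h]
  have hs := hstep t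
  split_ifs at hs with ht
  · exact ⟨t, ht, by omega⟩
  · omega

theorem tendsto_atTop_of_abs_sub_mul_le {α C : ℝ} (hα : 0 < α)
    (hbound : ∀ t, |(G t : ℝ) - t * α| ≤ C) : Tendsto G atTop atTop := by
  rw [← tendsto_intCast_atTop_iff (R := ℝ)]
  refine tendsto_atTop_mono (fun t => ?_) <| tendsto_atTop_add_const_right _ (-C)
    (tendsto_intCast_atTop_atTop.atTop_mul_const hα)
  linarith [(abs_le.1 (hbound t)).1]

theorem tendsto_atBot_of_abs_sub_mul_le {α C : ℝ} (hα : 0 < α)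
    (hbound : ∀ t, |(G t : ℝ) - t * α| ≤ C) : Tendsto G atBot atBot := by
  rw [← tendsto_intCast_atBot_iff (R := ℝ)]
  refine tendsto_atBot_mono (fun t => ?_) <| tendsto_atBot_add_const_right _ C
    ((tendsto_intCast_atBot_iff.2 tendsto_id).atBot_mul_const hα)
  show (G t : ℝ) ≤ t * α + C
  linarith [(abs_le.1 (hbound t)).2]

theorem bdEquiv_lattice_of_step {α C : ℝ} (hα : 0 < α)
    (hstep : ∀ t, G (t + 1) = G t + if t ∈ Z then 1 else 0)
    (hbound : ∀ t, |(G t : ℝ) - t * α| ≤ C) :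
    BDEquiv ((↑) '' Z) {x | ∃ n : ℤ, x = α⁻¹ * n} :=
  bdEquiv_image_intCast_of_bijOn hα.ne'
    ⟨Set.mapsTo_univ _ _, (strictMonoOn_of_step hstep).injOn,
      surjOn_of_step hstep (tendsto_atTop_of_abs_sub_mul_le hα hbound)
        (tendsto_atBot_of_abs_sub_mul_le hα hbound)⟩
    fun t _ => hbound t

end CountingFunction

noncomputable def zkCounting (ξ : ℝ) (k : ℕ) (t : ℤ) : ℤ :=
  ∑ j ∈ range k, ⌊(t - (j + 1 : ℝ)) * ξ⌋ - t * ⌊k * ξ⌋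

theorem zkCounting_succ (ξ : ℝ) (k : ℕ) (t : ℤ) :
    zkCounting ξ k (t + 1) =
      zkCounting ξ k t + if Int.fract (t * ξ) < Int.fract (k * ξ) then 1 else 0 := by
  have htelescope : ∑ j ∈ range k, (⌊((t + 1 : ℤ) - (j + 1 : ℝ)) * ξ⌋ - ⌊(t - (j + 1 : ℝ)) * ξ⌋)
      = ⌊t * ξ⌋ - ⌊t * ξ - k * ξ⌋ := by
    convert sum_range_sub' (fun j : ℕ => ⌊(t - j : ℝ) * ξ⌋) k using 3 <;> push_cast <;> ring_nf
  rw [sum_sub_distrib] at htelescope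
  rw [zkCounting, zkCounting]
  linear_combination htelescope + Int.floor_sub_floor_sub (t * ξ) (k * ξ)

theorem abs_zkCounting_sub_le (ξ : ℝ) (k : ℕ) (t : ℤ) :
    |(zkCounting ξ k t : ℝ) - t * Int.fract (k * ξ)| ≤ k * (k * |ξ| + 1) := by
  have hsum : (zkCounting ξ k t : ℝ) - t * Int.fract (k * ξ)
      = ∑ j ∈ range k, ((⌊(t - (j + 1 : ℝ)) * ξ⌋ : ℝ) - t * ξ) := by
    rw [zkCounting, Int.fract, sum_sub_distrib, sum_const, card_range, nsmul_eq_mul]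
    push_cast
    ring
  rw [hsum]
  refine (abs_sum_le_sum_abs _ _).trans <| (sum_le_card_nsmul _ _ _ fun j hj => ?_).trans_eq
    (by rw [card_range, nsmul_eq_mul])
  set y := (t - (j + 1 : ℝ)) * ξ with hy
  have hj : (j : ℝ) + 1 ≤ k := by exact_mod_cast mem_range.1 hj
  calc |(⌊y⌋ : ℝ) - t * ξ| = |Int.fract y + (j + 1) * ξ| := by
        rw [← abs_neg, Int.fract, hy]; ring_nf
    _ ≤ |Int.fract y| + |(j + 1) * ξ| := abs_add_le _ _
    _ ≤ k * |ξ| + 1 := by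
        rw [abs_of_nonneg (Int.fract_nonneg y), abs_mul,
          abs_of_nonneg (by positivity : (0 : ℝ) ≤ j + 1)]
        nlinarith [Int.fract_lt_one y, abs_nonneg ξ]

/-- For irrational `ξ` and a positive integer `k`, the set
`Z_k = {t ∈ ℤ : frac(ξt) ∈ [0, frac(kξ))}` is BD-equivalent to the lattice
`frac(kξ)⁻¹ ℤ`. -/
theorem Zk_BD_lattice (ξ : ℝ) (hξ : Irrational ξ) (k : ℕ) (hk : 0 < k) :
    BDEquiv ((fun t : ℤ => (t : ℝ)) ''
        {t : ℤ | Int.fract (ξ * t) ∈ Set.Ico (0 : ℝ) (Int.fract ((k : ℝ) * ξ))})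
      {x : ℝ | ∃ n : ℤ, x = (Int.fract ((k : ℝ) * ξ))⁻¹ * n} := by
  have hα : 0 < Int.fract ((k : ℝ) * ξ) :=
    Int.fract_pos.2 ((hξ.natCast_mul hk.ne').ne_int _)
  have hZ : {t : ℤ | Int.fract (ξ * t) ∈ Set.Ico (0 : ℝ) (Int.fract ((k : ℝ) * ξ))} =
      {t : ℤ | Int.fract (t * ξ) < Int.fract (k * ξ)} := by
    ext t
    simp [mul_comm, Int.fract_nonneg]
  rw [hZ]
  exact bdEquiv_lattice_of_step hα (zkCounting_succ ξ k) (abs_zkCounting_sub_le ξ k)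
end

section
/- Let ξ be irrational and let f: ℝ/ℤ → ℝ be given by f = χ_I − Length(I) where I is an interval of length frac(kξ) for some positive integer k. Then there exists a bounded function g: ℝ/ℤ → ℝ solving the cohomological equation g(x + ξ) − g(x) = f(x) for all x. -/
/-!
Write `h y = fract (y - a)` and `β = b - a = fract (k ξ)`. Since `0 ≤ a` and `b ≤ 1`, `x` lies in
`[a, b)` mod 1 exactly when `fract (x - a) < β`, and subtracting `β` from `fract (x - a)` wraps around
exactly then, so `χ_I - β = h (· - β) - h`. As `k ξ ≡ β` mod 1 this is `h (· - k ξ) - h`, which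
telescopes along the rotation: it is the coboundary of `g x = -∑_{j<k} h (x - (j + 1) ξ)`, and `|g| ≤ k`.
-/

open Finset

section BackwardSum

variable {A G : Type*} [AddCommGroup A]

def backwardSum [AddCommGroup G] (h : A → G) (ξ : A) (k : ℕ) (x : A) : G :=
  ∑ j ∈ range k, h (x - (j + 1) • ξ)

theorem backwardSum_add_sub [AddCommGroup G] (h : A → G) (ξ : A) (k : ℕ) (x : A) :
    backwardSum h ξ k (x + ξ) - backwardSum h ξ k x = h x - h (x - k • ξ) := by
  have hshift : ∀ j : ℕ, x + ξ - (j + 1) • ξ = x - j • ξ := fun j => by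
    rw [succ_nsmul]; abel
  simp only [backwardSum, hshift, ← sum_sub_distrib]
  simpa using sum_range_sub' (fun j => h (x - j • ξ)) k

theorem Function.Periodic.backwardSum [AddCommGroup G] {h : A → G} {c : A}
    (hc : Function.Periodic h c) (ξ : A) (k : ℕ) : Function.Periodic (backwardSum h ξ k) c :=
  fun x => sum_congr rfl fun j _ => by rw [add_sub_right_comm, hc]

theorem norm_backwardSum_le [SeminormedAddCommGroup G] {h : A → G} {C : ℝ}
    (hC : ∀ y, ‖h y‖ ≤ C) (ξ : A) (k : ℕ) (x : A) : ‖backwardSum h ξ k x‖ ≤ k * C :=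
  calc ‖backwardSum h ξ k x‖ ≤ ∑ j ∈ range k, ‖h (x - (j + 1) • ξ)‖ := norm_sum_le _ _
    _ ≤ k * C := (sum_le_card_nsmul (range k) _ C fun j _ => hC _).trans_eq (by simp)

end BackwardSum

namespace Int

variable {R : Type*} [CommRing R] [LinearOrder R] [IsStrictOrderedRing R] [FloorRing R]

theorem fract_fract_sub (u β : R) : fract (fract u - β) = fract (u - β) :=
  fract_eq_fract.2 ⟨-⌊u⌋, by rw [sub_sub_sub_cancel_right, fract_sub_self]; push_cast; ring⟩

theorem fract_sub_sub_fract {β : R} (hβ₀ : 0 ≤ β) (hβ₁ : β ≤ 1) (u : R) :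
    fract (u - β) - fract u = (if fract u < β then 1 else 0) - β := by
  have hu₀ := fract_nonneg u
  have hu₁ := fract_lt_one u
  split_ifs with hlt
  · have : fract (fract u - β) = fract u - β + 1 :=
      fract_eq_iff.2 ⟨by linarith, by linarith, -1, by push_cast; ring⟩
    rw [← fract_fract_sub, this]; ring
  · rw [← fract_fract_sub, fract_eq_self.2 ⟨by linarith, by linarith⟩]; ring

theorem fract_sub_lt_iff_mem_Ico {a b : R} (ha : 0 ≤ a) (hb : b ≤ 1) (x : R) :
    fract (x - a) < b - a ↔ fract x ∈ Set.Ico a b := by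
  have hx₀ := fract_nonneg x
  have hx₁ := fract_lt_one x
  rw [← fract_fract_sub, Set.mem_Ico]
  rcases le_or_gt a (fract x) with hle | hlt
  · rw [fract_eq_self.2 ⟨sub_nonneg.2 hle, by linarith⟩]
    exact ⟨fun h => ⟨hle, by linarith⟩, fun h => by linarith [h.2]⟩
  · have hfloor : (⌊fract x - a⌋ : R) ≤ -1 := mod_cast floor_le_neg_one_iff.2 (by linarith)
    refine iff_of_false (fun h => ?_) fun h => (not_le.2 hlt) h.1
    rw [fract] at h
    linarith

end Int

theorem hecke_ostrowski_transfer_function_general (ξ a b : ℝ)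
    (ha : 0 ≤ a) (hb : b ≤ 1) (k : ℕ)
    (hlen : b - a = Int.fract ((k : ℝ) * ξ)) :
    ∃ g : ℝ → ℝ, (∃ M : ℝ, ∀ x : ℝ, |g x| ≤ M) ∧ (∀ x : ℝ, g (x + 1) = g x) ∧
      ∀ x : ℝ, g (x + ξ) - g x =
        (if Int.fract x ∈ Set.Ico a b then (1 : ℝ) else 0) - (b - a) := by
  set h : ℝ → ℝ := fun y => Int.fract (y - a) with h_def
  have h_periodic : Function.Periodic h 1 := fun y => by
    simp only [h_def, add_sub_right_comm, Int.fract_add_one]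
  have h_norm_le : ∀ y, ‖h y‖ ≤ 1 := fun y => by
    rw [Real.norm_of_nonneg (Int.fract_nonneg _)]
    exact (Int.fract_lt_one _).le
  have h_rotate : ∀ x, h (x - k • ξ) = Int.fract (x - a - (b - a)) := fun x =>
    Int.fract_eq_fract.2 ⟨-⌊(k : ℝ) * ξ⌋, by
      rw [hlen, nsmul_eq_mul, Int.cast_neg, ← Int.self_sub_fract]; ring⟩
  have hβ₀ : 0 ≤ b - a := hlen ▸ Int.fract_nonneg _
  have hβ₁ : b - a ≤ 1 := hlen ▸ (Int.fract_lt_one _).le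
  refine ⟨fun x => -backwardSum h ξ k x, ⟨k * 1, fun x => ?_⟩, fun x => ?_, fun x => ?_⟩
  · rw [abs_neg, ← Real.norm_eq_abs]
    exact norm_backwardSum_le h_norm_le ξ k x
  · exact congrArg Neg.neg (h_periodic.backwardSum ξ k x)
  · rw [neg_sub_neg, ← neg_sub, backwardSum_add_sub, neg_sub, h_rotate,
      Int.fract_sub_sub_fract hβ₀ hβ₁]
    simp only [Int.fract_sub_lt_iff_mem_Ico ha hb]

/-- Transfer-function reformulation of the Hecke–Ostrowski theorem: for the
interval `I = [a,b) ⊆ [0,1)` of length `frac(kξ)` (k a positive integer), the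
function `f = χ_I − Length I` (viewed as a ℤ-periodic function on ℝ, i.e. a
function on ℝ/ℤ) admits a bounded transfer function `g` on ℝ/ℤ solving the
cohomological equation `g(x + ξ) − g(x) = f(x)`. -/
theorem hecke_ostrowski_transfer_function (ξ a b : ℝ) (hξ : Irrational ξ)
    (ha : 0 ≤ a) (hab : a ≤ b) (hb : b ≤ 1) (k : ℕ) (hk : 0 < k)
    (hlen : b - a = Int.fract ((k : ℝ) * ξ)) :
    ∃ g : ℝ → ℝ, (∃ M : ℝ, ∀ x : ℝ, |g x| ≤ M) ∧ (∀ x : ℝ, g (x + 1) = g x) ∧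
      ∀ x : ℝ, g (x + ξ) - g x =
        (if Int.fract x ∈ Set.Ico a b then (1 : ℝ) else 0) - (b - a) :=
  hecke_ostrowski_transfer_function_general ξ a b ha hb k hlen
end

section
/- Let ξ be irrational, and suppose I, J ⊂ ℝ/ℤ are intervals such that J is a translate of I by mξ mod ℤ for some integer m. Then D(N; I) − D(N; J) is bounded uniformly in N, where D(N; K) = #{0 ≤ n ≤ N : x + nξ ∈ K mod ℤ} − N·Length(K). -/
/-!
The orbit points counted for the translate `J = I + mξ` are `x + kξ` with `k` running over the
window `{-m, …, N - m}` instead of `{0, …, N}`, and both intervals have the same length. Hence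
`D(N; I) - D(N; J)` is the difference of the numbers of hits in two integer windows of equal
size that differ in at most `|m|` indices, and so it is bounded by `|m|`.
-/

open scoped Classical

open Finset

namespace Finset

theorem card_filter_le_card_filter_add_card_sdiff {α : Type*} [DecidableEq α] (s t : Finset α)
    (p : α → Prop) [DecidablePred p] : #(s.filter p) ≤ #(t.filter p) + #(s \ t) :=
  calc #(s.filter p) ≤ #(s.filter p \ t.filter p) + #(t.filter p) := card_le_card_sdiff_add_card
    _ ≤ #(s \ t) + #(t.filter p) := by
        refine Nat.add_le_add_right (card_le_card fun a => ?_) _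
        simp only [mem_sdiff, mem_filter]
        tauto
    _ = _ := add_comm _ _

theorem image_natCast_add_range (c : ℤ) (n : ℕ) :
    (range n).image (fun k : ℕ => (k : ℤ) + c) = Ico c (c + n) := by
  ext j
  simp only [mem_image, mem_range, mem_Ico]
  constructor
  · rintro ⟨k, hk, rfl⟩
    omega
  · intro hj
    exact ⟨(j - c).toNat, by omega, by omega⟩

theorem card_filter_image_natCast_range {R : Type*} [AddGroupWithOne R] [CharZero R]
    [DecidableEq R] (q : R → Prop) [DecidablePred q] (c : ℤ) (n : ℕ) :
    #(((range n).image (Nat.cast : ℕ → R)).filter (fun r => q (r + c))) =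
      #((Ico c (c + n)).filter (fun k : ℤ => q k)) := by
  rw [← image_natCast_add_range, filter_image, filter_image,
    card_image_of_injective _ Nat.cast_injective,
    card_image_of_injective _ fun k l h => by simpa using h]
  simp only [Int.cast_add, Int.cast_natCast]

end Finset

namespace Int

theorem card_Ico_sdiff_Ico_add_le (c d : ℤ) (n : ℕ) :
    #(Ico c (c + n) \ Ico d (d + n)) ≤ (c - d).natAbs := by
  calc #(Ico c (c + n) \ Ico d (d + n)) ≤ #(Ico c d ∪ Ico (d + n) (c + n)) := by
        refine card_le_card fun j hj => ?_
        simp only [mem_sdiff, mem_Ico, mem_union] at hj ⊢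
        omega
    _ ≤ #(Ico c d) + #(Ico (d + n) (c + n)) := card_union_le _ _
    _ = (c - d).natAbs := by rw [Int.card_Ico, Int.card_Ico]; omega

theorem card_filter_Ico_add_le (p : ℤ → Prop) [DecidablePred p] (c d : ℤ) (n : ℕ) :
    #((Ico c (c + n)).filter p) ≤ #((Ico d (d + n)).filter p) + (c - d).natAbs :=
  (card_filter_le_card_filter_add_card_sdiff _ _ p).trans
    (Nat.add_le_add_left (card_Ico_sdiff_Ico_add_le c d n) _)

theorem abs_card_filter_Ico_sub_card_filter_Ico_le (p : ℤ → Prop) [DecidablePred p]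
    (c d : ℤ) (n : ℕ) :
    |(#((Ico c (c + n)).filter p) : ℝ) - #((Ico d (d + n)).filter p)| ≤ (c - d).natAbs := by
  have hcd := card_filter_Ico_add_le p c d n
  have hdc := card_filter_Ico_add_le p d c n
  rw [← neg_sub, natAbs_neg] at hdc
  rw [abs_sub_le_iff, sub_le_iff_le_add', sub_le_iff_le_add']
  exact ⟨mod_cast hcd, mod_cast hdc⟩

end Int

/-- `J = I + mξ` in `ℝ/ℤ`, so `x + nξ ∈ J` exactly when `fract (x + nξ - mξ) ∈ [a, b)`. -/
theorem disc_translate_bounded_general (ξ x a b : ℝ) (m : ℤ) :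
    ∃ C : ℝ, ∀ N : ℕ,
      |localDisc ξ x a b N -
        ((((Finset.range (N + 1)).filter
            (fun n => Int.fract (x + n * ξ - m * ξ) ∈ Set.Ico a b)).card : ℝ)
          - N * (b - a))| ≤ C := by
  set q : ℝ → Prop := fun r => Int.fract (x + r * ξ) ∈ Set.Ico a b
  refine ⟨m.natAbs, fun N => ?_⟩
  have hI := card_filter_image_natCast_range q 0 (N + 1)
  have hJ := card_filter_image_natCast_range q (-m) (N + 1)
  -- The index `n` in the statement is real, so `range (N + 1)` enters as a `Finset ℝ` through
  -- the `Finset` monad.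
  rw [localDisc, sub_sub_sub_cancel_right, bind_pure_comp, fmap_def]
  simp only [q, Int.cast_zero, add_zero, Int.cast_neg, ← sub_eq_add_neg, sub_mul,
    ← add_sub_assoc] at hI hJ
  rw [hI, hJ]
  simpa using Int.abs_card_filter_Ico_sub_card_filter_Ico_le _ 0 (-m) (N + 1)

/-- Key cancellation lemma: if `J` is the translate of the interval `I` by `mξ`
(mod ℤ), then the difference `D(N; I) − D(N; J)` of local discrepancies is
uniformly bounded in `N`.  Here `J` is the interval `I + mξ` in ℝ/ℤ, so the
count for `J` is `#{n ≤ N : frac(x + nξ − mξ) ∈ [a,b)}`, and `Length J =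
Length I = b − a`. -/
theorem disc_translate_bounded (ξ x a b : ℝ) (hξ : Irrational ξ)
    (ha : 0 ≤ a) (hab : a ≤ b) (hb : b ≤ 1) (m : ℤ) :
    ∃ C : ℝ, ∀ N : ℕ,
      |localDisc ξ x a b N -
        ((((Finset.range (N + 1)).filter
            (fun n => Int.fract (x + n * ξ - m * ξ) ∈ Set.Ico a b)).card : ℝ)
          - N * (b - a))| ≤ C :=
  disc_translate_bounded_general ξ x a b m
end

section
/- Let ξ be irrational and let a < b < c with b − a ∈ ℤ + ℤξ. Then the discrepancy of {t ∈ ℤ : frac(ξt) ∈ [a,c) mod 1} is bounded if and only if the discrepancy of {t ∈ ℤ : frac(ξt) ∈ [b,c) mod 1} is bounded. -/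
/-!
Cutting `[a, c)` at `b` splits the visits to `[a, c)` into the disjoint visits to `[a, b)` and to
`[b, c)`; counts and densities add, so it suffices that the visits to `[a, b)` have bounded
discrepancy. This is where `b - a = kξ + m` enters: the indicator of `fract y < β` equals
`β - fract y + fract (y - β)`, and shifting by `β = kξ + m` is the same as shifting the time `t`
by `k`, so over an interval of times the fluctuating part telescopes to at most `|k|` terms.
-/

open Finset

/-- A set `Z ⊆ ℤ` has bounded discrepancy with respect to a density `δ` if
`|#(I ∩ Z) − δ·Length I|` is uniformly bounded over finite intervals `I ⊆ ℝ`. -/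
def HasBoundedDisc (Z : Set ℤ) (δ : ℝ) : Prop :=
  ∃ C : ℝ, 0 < C ∧ ∀ s t : ℝ, s ≤ t →
    |(Nat.card {z : ℤ // z ∈ Z ∧ (z : ℝ) ∈ Set.Icc s t} : ℝ) - δ * (t - s)| < C

def rotationVisits (ξ a c : ℝ) : Set ℤ := {t : ℤ | ∃ m : ℤ, a ≤ ξ * t - m ∧ ξ * t - m < c}

lemma natCard_mem_Icc_eq_card_filter (Z : Set ℤ) [DecidablePred (· ∈ Z)] (s t : ℝ) :
    Nat.card {z : ℤ // z ∈ Z ∧ (z : ℝ) ∈ Set.Icc s t} = #{z ∈ Icc ⌈s⌉ ⌊t⌋ | z ∈ Z} := by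
  rw [← Nat.card_eq_finsetCard]
  exact Nat.card_congr <| Equiv.subtypeEquivRight fun z => by
    simp [Int.ceil_le, Int.le_floor, and_comm]

lemma natCard_union_mem_Icc {X Y : Set ℤ} (hXY : Disjoint X Y) (s t : ℝ) :
    Nat.card {z : ℤ // z ∈ X ∪ Y ∧ (z : ℝ) ∈ Set.Icc s t} =
      Nat.card {z : ℤ // z ∈ X ∧ (z : ℝ) ∈ Set.Icc s t} +
        Nat.card {z : ℤ // z ∈ Y ∧ (z : ℝ) ∈ Set.Icc s t} := by
  classical
  rw [natCard_mem_Icc_eq_card_filter (X ∪ Y), natCard_mem_Icc_eq_card_filter X,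
    natCard_mem_Icc_eq_card_filter Y]
  simp only [Set.mem_union, filter_or]
  rw [card_union_of_disjoint]
  exact disjoint_filter.2 fun z _ hX hY => Set.disjoint_left.1 hXY hX hY

theorem HasBoundedDisc.union_iff {X Y : Set ℤ} {δX δY : ℝ} (hXY : Disjoint X Y)
    (hY : HasBoundedDisc Y δY) :
    HasBoundedDisc (X ∪ Y) (δX + δY) ↔ HasBoundedDisc X δX := by
  obtain ⟨D, hD, hYD⟩ := hY
  constructor
  · rintro ⟨C, hC, hXYC⟩
    refine ⟨C + D, by positivity, fun s t hst => ?_⟩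
    have h := hXYC s t hst
    have hY := hYD s t hst
    rw [natCard_union_mem_Icc hXY, Nat.cast_add] at h
    rw [abs_lt] at h hY ⊢
    constructor <;> linarith
  · rintro ⟨C, hC, hXC⟩
    refine ⟨C + D, by positivity, fun s t hst => ?_⟩
    have hX := hXC s t hst
    have hY := hYD s t hst
    rw [natCard_union_mem_Icc hXY, Nat.cast_add]
    rw [abs_lt] at hX hY ⊢
    constructor <;> linarith

lemma abs_card_Icc_ceil_floor_sub_le {s t : ℝ} (hst : s ≤ t) :
    |(#(Icc ⌈s⌉ ⌊t⌋) : ℝ) - (t - s)| ≤ 1 := by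
  have hs := Int.le_ceil s
  have hs' := Int.ceil_lt_add_one s
  have ht := Int.floor_le t
  have ht' := Int.sub_one_lt_floor t
  have hle : ⌈s⌉ ≤ ⌊t⌋ + 1 := by
    have : ⌈s⌉ < ⌊t⌋ + 2 := by exact_mod_cast (show (⌈s⌉ : ℝ) < ⌊t⌋ + 2 by linarith)
    omega
  have hcard : (#(Icc ⌈s⌉ ⌊t⌋) : ℝ) = ⌊t⌋ + 1 - ⌈s⌉ := by
    exact_mod_cast Int.card_Icc_of_le _ _ hle
  rw [hcard, abs_le]
  constructor <;> linarith

lemma card_Icc_sdiff_Icc_le (L U L' U' : ℤ) :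
    #(Icc L U \ Icc L' U') ≤ (L' - L).toNat + (U - U').toNat := by
  have hsub : Icc L U \ Icc L' U' ⊆ Icc L (L' - 1) ∪ Icc (U' + 1) U := by
    intro z hz
    simp only [mem_sdiff, mem_Icc, mem_union] at hz ⊢
    omega
  calc #(Icc L U \ Icc L' U') ≤ #(Icc L (L' - 1) ∪ Icc (U' + 1) U) := card_le_card hsub
    _ ≤ #(Icc L (L' - 1)) + #(Icc (U' + 1) U) := card_union_le _ _
    _ = (L' - L).toNat + (U - U').toNat := by rw [Int.card_Icc, Int.card_Icc]; omega

lemma abs_sum_Icc_sub_comp_sub_le {g : ℤ → ℝ} (hg0 : ∀ z, 0 ≤ g z) (hg1 : ∀ z, g z ≤ 1)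
    (k L U : ℤ) : |∑ z ∈ Icc L U, (g (z - k) - g z)| ≤ k.natAbs := by
  have hbound : ∀ A : Finset ℤ, #A ≤ k.natAbs → ∑ z ∈ A, g z ≤ k.natAbs := fun A hA =>
    calc ∑ z ∈ A, g z ≤ #A • (1 : ℝ) := sum_le_card_nsmul A g 1 fun z _ => hg1 z
      _ ≤ k.natAbs := by rw [nsmul_one]; exact_mod_cast hA
  have hshift : ∑ z ∈ Icc L U, g (z - k) = ∑ z ∈ Icc (L - k) (U - k), g z := by
    simp_rw [sub_eq_add_neg, ← map_add_right_Icc, sum_map, addRightEmbedding_apply]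
  rw [sum_sub_distrib, hshift, ← sum_sdiff_sub_sum_sdiff]
  refine abs_sub_le_of_nonneg_of_le (sum_nonneg fun z _ => hg0 z) (hbound _ ?_)
    (sum_nonneg fun z _ => hg0 z) (hbound _ ?_) <;>
  exact (card_Icc_sdiff_Icc_le _ _ _ _).trans (by omega)

lemma mem_rotationVisits_iff {ξ a c : ℝ} (hca : c ≤ a + 1) (t : ℤ) :
    t ∈ rotationVisits ξ a c ↔ Int.fract (ξ * t - a) < c - a := by
  constructor
  · rintro ⟨m, ham, hmc⟩
    have hfract : Int.fract (ξ * t - a) = ξ * t - m - a := by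
      rw [Int.fract_eq_iff]
      exact ⟨by linarith, by linarith, m, by ring⟩
    linarith
  · intro h
    refine ⟨⌊ξ * t - a⌋, ?_, ?_⟩ <;>
      linarith [Int.fract_nonneg (ξ * t - a), Int.self_sub_floor (ξ * t - a)]

lemma ite_fract_lt_eq {β : ℝ} (h0 : 0 ≤ β) (h1 : β ≤ 1) (y : ℝ) :
    (if Int.fract y < β then (1 : ℝ) else 0) = β - Int.fract y + Int.fract (y - β) := by
  have hy0 := Int.fract_nonneg y
  have hy1 := Int.fract_lt_one y
  split_ifs with h
  · have : Int.fract (y - β) = Int.fract y - β + 1 := by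
      rw [Int.fract_eq_iff]
      exact ⟨by linarith, by linarith, ⌊y⌋ - 1, by push_cast; linarith [Int.self_sub_floor y]⟩
    linarith
  · have : Int.fract (y - β) = Int.fract y - β := by
      rw [Int.fract_eq_iff]
      exact ⟨by linarith, by linarith, ⌊y⌋, by linarith [Int.self_sub_floor y]⟩
    linarith

theorem hasBoundedDisc_rotationVisits {ξ a c : ℝ} {k m : ℤ} (hlen : c - a = k * ξ + m)
    (hac : a ≤ c) (hca : c ≤ a + 1) :
    HasBoundedDisc (rotationVisits ξ a c) (c - a) := by
  classical
  set g : ℤ → ℝ := fun z => Int.fract (ξ * z - a)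
  have hind : ∀ z : ℤ,
      (if z ∈ rotationVisits ξ a c then (1 : ℝ) else 0) = (c - a) + (g (z - k) - g z) := by
    intro z
    have hshift : ξ * z - a - (c - a) = ξ * ↑(z - k) - a - m := by rw [hlen]; push_cast; ring
    simp only [mem_rotationVisits_iff hca]
    rw [ite_fract_lt_eq (by linarith) (by linarith), hshift, Int.fract_sub_intCast]
    ring
  refine ⟨k.natAbs + 2, by positivity, fun s t hst => ?_⟩
  have hT := abs_sum_Icc_sub_comp_sub_le (g := g) (fun _ => Int.fract_nonneg _)
    (fun _ => (Int.fract_lt_one _).le) k ⌈s⌉ ⌊t⌋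
  have hI := abs_card_Icc_ceil_floor_sub_le hst
  rw [natCard_mem_Icc_eq_card_filter, ← sum_boole, sum_congr rfl fun z _ => hind z,
    sum_add_distrib, sum_const, nsmul_eq_mul]
  calc |#(Icc ⌈s⌉ ⌊t⌋) * (c - a) + ∑ z ∈ Icc ⌈s⌉ ⌊t⌋, (g (z - k) - g z) - (c - a) * (t - s)|
      = |(c - a) * (#(Icc ⌈s⌉ ⌊t⌋) - (t - s)) + ∑ z ∈ Icc ⌈s⌉ ⌊t⌋, (g (z - k) - g z)| := by
        congr 1; ring
    _ ≤ (c - a) * |(#(Icc ⌈s⌉ ⌊t⌋) : ℝ) - (t - s)| + |∑ z ∈ Icc ⌈s⌉ ⌊t⌋, (g (z - k) - g z)| := by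
        exact (abs_add_le _ _).trans_eq (by rw [abs_mul, abs_of_nonneg (sub_nonneg.2 hac)])
    _ ≤ (c - a) * 1 + k.natAbs := by gcongr
    _ < k.natAbs + 2 := by linarith

lemma rotationVisits_union {ξ a b c : ℝ} (hab : a ≤ b) (hbc : b ≤ c) :
    rotationVisits ξ a b ∪ rotationVisits ξ b c = rotationVisits ξ a c := by
  ext t
  simp only [rotationVisits, Set.mem_union, Set.mem_ofPred_eq]
  constructor
  · rintro (⟨m, h₁, h₂⟩ | ⟨m, h₁, h₂⟩)
    exacts [⟨m, h₁, by linarith⟩, ⟨m, by linarith, h₂⟩]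
  · rintro ⟨m, h₁, h₂⟩
    rcases lt_or_ge (ξ * t - m) b with h | h
    exacts [Or.inl ⟨m, h₁, h⟩, Or.inr ⟨m, h, h₂⟩]

lemma disjoint_rotationVisits {ξ a b c : ℝ} (hca : c ≤ a + 1) :
    Disjoint (rotationVisits ξ a b) (rotationVisits ξ b c) := by
  refine Set.disjoint_left.2 fun t ⟨m, ham, hmb⟩ ⟨m', hbm', hm'c⟩ => ?_
  have h₁ : m' < m := by exact_mod_cast (show (m' : ℝ) < m by linarith)
  have h₂ : m < m' + 1 := by exact_mod_cast (show (m : ℝ) < m' + 1 by linarith)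
  omega

theorem boundary_replacement_general (ξ a b c : ℝ)
    (hab : a < b) (hbc : b < c) (hca : c < a + 1)
    (hlen : ∃ k m : ℤ, b - a = k * ξ + m) :
    HasBoundedDisc {t : ℤ | ∃ m : ℤ, a ≤ ξ * t - m ∧ ξ * t - m < c} (c - a) ↔
      HasBoundedDisc {t : ℤ | ∃ m : ℤ, b ≤ ξ * t - m ∧ ξ * t - m < c} (c - b) := by
  obtain ⟨k, m, hkm⟩ := hlen
  have hstrip := hasBoundedDisc_rotationVisits hkm hab.le (by linarith)
  change HasBoundedDisc (rotationVisits ξ a c) _ ↔ HasBoundedDisc (rotationVisits ξ b c) _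
  rw [← rotationVisits_union hab.le hbc.le, Set.union_comm, show c - a = (c - b) + (b - a) by ring]
  exact HasBoundedDisc.union_iff (disjoint_rotationVisits hca.le).symm hstrip

/-- Strip-boundary replacement: for irrational `ξ` and `a < b < c < a + 1` with
`b − a ∈ ℤ + ℤξ`, the set `{t ∈ ℤ : frac(ξt) ∈ [a,c) mod 1}` has bounded
discrepancy (w.r.t. its density `c − a`) if and only if
`{t ∈ ℤ : frac(ξt) ∈ [b,c) mod 1}` has bounded discrepancy (w.r.t. `c − b`). -/
theorem boundary_replacement (ξ a b c : ℝ) (hξ : Irrational ξ)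
    (hab : a < b) (hbc : b < c) (hca : c < a + 1)
    (hlen : ∃ k m : ℤ, b - a = k * ξ + m) :
    HasBoundedDisc {t : ℤ | ∃ m : ℤ, a ≤ ξ * t - m ∧ ξ * t - m < c} (c - a) ↔
      HasBoundedDisc {t : ℤ | ∃ m : ℤ, b ≤ ξ * t - m ∧ ξ * t - m < c} (c - b) :=
  boundary_replacement_general ξ a b c hab hbc hca hlen
end

section
/- If a discrete set Y ⊂ ℝ is BD-equivalent to a lattice αℤ (α > 0), then Y has density α⁻¹: that is, #(Y ∩ [−T, T])/(2T) → α⁻¹ as T → ∞. -/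
/-!
A bijection `φ : Y ≃ αℤ` moving points by at most `M` maps `Y ∩ [-T, T]` injectively into
`αℤ ∩ [-(T + M), T + M]`, and `φ⁻¹` maps `αℤ ∩ [-(T - M), T - M]` injectively into `Y ∩ [-T, T]`.
Since `αℤ ∩ [-R, R]` has `2⌊R/α⌋ + 1 = 2R/α + O(1)` points, `#(Y ∩ [-T, T]) = 2T/α + O(1)`,
and dividing by `2T` gives the density `α⁻¹`.
-/

open Set Filter Topology

section BoundedDisplacement

variable {Y Z : Set ℝ} {f : Y → Z} {M : ℝ}

lemma exists_injective_inter_Icc_of_abs_sub_le (hf : Function.Injective f)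
    (hM : ∀ y : Y, |(y : ℝ) - f y| ≤ M) (R : ℝ) :
    ∃ g : ↥(Y ∩ Icc (-R) R) → ↥(Z ∩ Icc (-(R + M)) (R + M)), Function.Injective g := by
  refine ⟨fun y => ⟨f ⟨y, y.2.1⟩, (f _).2, ?_⟩, fun y₁ y₂ h => ?_⟩
  · have hy := y.2.2
    have hdist := abs_sub_le_iff.mp (hM ⟨y, y.2.1⟩)
    constructor <;> linarith [hy.1, hy.2, hdist.1, hdist.2]
  · have := hf (Subtype.ext (congrArg Subtype.val h :))
    exact Subtype.ext (congrArg Subtype.val this :)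

lemma finite_inter_Icc_of_abs_sub_le (hf : Function.Injective f)
    (hM : ∀ y : Y, |(y : ℝ) - f y| ≤ M) {R : ℝ} (hZ : (Z ∩ Icc (-(R + M)) (R + M)).Finite) :
    (Y ∩ Icc (-R) R).Finite := by
  obtain ⟨g, hg⟩ := exists_injective_inter_Icc_of_abs_sub_le hf hM R
  have := hZ.to_subtype
  exact Set.finite_coe_iff.mp (Finite.of_injective g hg)

lemma card_inter_Icc_le_of_abs_sub_le (hf : Function.Injective f)
    (hM : ∀ y : Y, |(y : ℝ) - f y| ≤ M) {R : ℝ} (hZ : (Z ∩ Icc (-(R + M)) (R + M)).Finite) :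
    Nat.card ↥(Y ∩ Icc (-R) R) ≤ Nat.card ↥(Z ∩ Icc (-(R + M)) (R + M)) := by
  obtain ⟨g, hg⟩ := exists_injective_inter_Icc_of_abs_sub_le hf hM R
  have := hZ.to_subtype
  exact Nat.card_le_card_of_injective g hg

end BoundedDisplacement

section Lattice

variable {α : ℝ} (hα : 0 < α)
include hα

lemma lattice_inter_Icc_eq_image (R : ℝ) :
    {x : ℝ | ∃ n : ℤ, x = α * n} ∩ Icc (-R) R =
      (fun n : ℤ => α * n) '' Icc (-⌊R / α⌋) ⌊R / α⌋ := by
  ext x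
  simp only [mem_inter_iff, mem_ofPred_eq, mem_Icc, mem_image]
  constructor
  · rintro ⟨⟨n, rfl⟩, hlo, hhi⟩
    refine ⟨n, ⟨?_, ?_⟩, rfl⟩
    · rw [neg_le, Int.le_floor, le_div_iff₀ hα]; push_cast; linarith
    · rw [Int.le_floor, le_div_iff₀ hα]; linarith
  · rintro ⟨n, ⟨hlo, hhi⟩, rfl⟩
    refine ⟨⟨n, rfl⟩, ?_, ?_⟩
    · have : ((-n : ℤ) : ℝ) ≤ R / α := Int.le_floor.mp (neg_le.mp hlo)
      rw [le_div_iff₀ hα] at this; push_cast at this; linarith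
    · have : (n : ℝ) ≤ R / α := Int.le_floor.mp hhi
      rw [le_div_iff₀ hα] at this; linarith

lemma finite_lattice_inter_Icc (R : ℝ) :
    ({x : ℝ | ∃ n : ℤ, x = α * n} ∩ Icc (-R) R).Finite := by
  rw [lattice_inter_Icc_eq_image hα]
  exact (finite_Icc _ _).image _

lemma card_lattice_inter_Icc {R : ℝ} (hR : 0 ≤ R) :
    (Nat.card ↥({x : ℝ | ∃ n : ℤ, x = α * n} ∩ Icc (-R) R) : ℝ) = 2 * ⌊R / α⌋ + 1 := by
  have hmul : Function.Injective (fun n : ℤ => α * n) := fun m n h =>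
    Int.cast_injective (mul_left_cancel₀ hα.ne' h)
  have hN : 0 ≤ ⌊R / α⌋ := Int.floor_nonneg.mpr (div_nonneg hR hα.le)
  rw [lattice_inter_Icc_eq_image hα, Nat.card_image_of_injective hmul, Nat.card_eq_card_toFinset,
    toFinset_Icc, Int.card_Icc, ← Int.cast_natCast, Int.toNat_of_nonneg (by omega)]
  push_cast
  ring

lemma abs_card_lattice_inter_Icc_sub_le {R : ℝ} (hR : 0 ≤ R) :
    |(Nat.card ↥({x : ℝ | ∃ n : ℤ, x = α * n} ∩ Icc (-R) R) : ℝ) - 2 * α⁻¹ * R| ≤ 1 := by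
  rw [card_lattice_inter_Icc hα hR, abs_le, mul_assoc, inv_mul_eq_div]
  constructor <;> linarith [Int.floor_le (R / α), Int.sub_one_lt_floor (R / α)]

end Lattice

lemma tendsto_div_self_of_abs_sub_mul_le {f : ℝ → ℝ} {a K : ℝ}
    (h : ∀ᶠ T in atTop, |f T - a * T| ≤ K) :
    Tendsto (fun T => f T / T) atTop (𝓝 a) := by
  have herr : Tendsto (fun T => (f T - a * T) / T) atTop (𝓝 0) := by
    refine squeeze_zero_norm' ?_ ((tendsto_const_nhds (x := K)).div_atTop tendsto_id)
    filter_upwards [h, eventually_gt_atTop 0] with T hT hT0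
    rw [norm_div, Real.norm_of_nonneg hT0.le]
    exact div_le_div_of_nonneg_right hT hT0.le
  have := herr.add_const a
  rw [zero_add] at this
  refine this.congr' ?_
  filter_upwards [eventually_gt_atTop 0] with T hT0
  field_simp
  ring

lemma abs_card_inter_Icc_sub_le_of_equiv_lattice {Y : Set ℝ} {α M : ℝ} (hα : 0 < α)
    (φ : Y ≃ {x : ℝ | ∃ n : ℤ, x = α * n}) (hM : ∀ y : Y, |(y : ℝ) - φ y| ≤ M)
    {T : ℝ} (hT : |M| ≤ T) :
    |(Nat.card ↥(Y ∩ Icc (-T) T) : ℝ) - 2 * α⁻¹ * T| ≤ 2 * α⁻¹ * M + 1 := by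
  obtain ⟨hTM, hMT⟩ := abs_le.mp hT
  have hM_symm : ∀ z : {x : ℝ | ∃ n : ℤ, x = α * n}, |(z : ℝ) - φ.symm z| ≤ M := fun z => by
    simpa [abs_sub_comm] using hM (φ.symm z)
  have hΛfin := finite_lattice_inter_Icc hα (T + M)
  have hupper : Nat.card ↥(Y ∩ Icc (-T) T) ≤ _ :=
    card_inter_Icc_le_of_abs_sub_le φ.injective hM hΛfin
  have hYfin := finite_inter_Icc_of_abs_sub_le φ.injective hM hΛfin
  have hlower := card_inter_Icc_le_of_abs_sub_le φ.symm.injective hM_symm (R := T - M)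
    (by rwa [sub_add_cancel])
  rw [sub_add_cancel] at hlower
  have hlat_upper := abs_card_lattice_inter_Icc_sub_le hα (R := T + M) (by linarith)
  have hlat_lower := abs_card_lattice_inter_Icc_sub_le hα (R := T - M) (by linarith)
  rw [abs_le] at hlat_upper hlat_lower ⊢
  have hupper_real := (Nat.cast_le (α := ℝ)).mpr hupper
  have hlower_real := (Nat.cast_le (α := ℝ)).mpr hlower
  constructor <;> linarith

theorem BD_lattice_density_general (Y : Set ℝ) (α : ℝ) (hα : 0 < α)
    (hBD : BDEquiv Y {x : ℝ | ∃ n : ℤ, x = α * n}) :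
    Filter.Tendsto
      (fun T : ℝ => (Nat.card ↥(Y ∩ Set.Icc (-T) T) : ℝ) / (2 * T))
      Filter.atTop (nhds α⁻¹) := by
  obtain ⟨φ, M, hM⟩ := hBD
  have hcount : ∀ᶠ T in atTop,
      |(Nat.card ↥(Y ∩ Icc (-T) T) : ℝ) - 2 * α⁻¹ * T| ≤ 2 * α⁻¹ * M + 1 := by
    filter_upwards [eventually_ge_atTop |M|] with T hT
    exact abs_card_inter_Icc_sub_le_of_equiv_lattice hα φ hM hT
  have := (tendsto_div_self_of_abs_sub_mul_le hcount).div_const 2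
  simpa [div_div, mul_comm] using this

/-- Density is a BD invariant: if a discrete (locally finite) set `Y ⊆ ℝ` is
BD-equivalent to the lattice `αℤ` with `α > 0`, then `Y` has density `α⁻¹`:
`#(Y ∩ [−T,T])/(2T) → α⁻¹` as `T → ∞`. -/
theorem BD_lattice_density (Y : Set ℝ) (α : ℝ) (hα : 0 < α)
    (hfin : ∀ s t : ℝ, (Y ∩ Set.Icc s t).Finite)
    (hBD : BDEquiv Y {x : ℝ | ∃ n : ℤ, x = α * n}) :
    Filter.Tendsto
      (fun T : ℝ => (Nat.card ↥(Y ∩ Set.Icc (-T) T) : ℝ) / (2 * T))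
      Filter.atTop (nhds α⁻¹) :=
  BD_lattice_density_general Y α hα hBD
end
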